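/- arXiv:2601.15388 — 10 statements merged into one kernel-verified Lean document; each statement's English description precedes it below -/
import Mathlib

section
/- Let (S₁,S₂,I₁,I₂,R₁,R₂,D₁,D₂) be a solution of the two-group active-population SIRD model on [0,∞) with Nᵢ(t) > 0 for all t ≥ 0, whose initial data satisfy Sᵢ(0), Iᵢ(0), Rᵢ(0), Dᵢ(0) ≥ 0 and Sᵢ(0)+Iᵢ(0)+Rᵢ(0)+Dᵢ(0) = Ñᵢ for i = 1,2. Then for every t ≥ 0 and i = 1,2 one has Sᵢ(t)+Iᵢ(t)+Rᵢ(t)+Dᵢ(t) = Ñᵢ and 0 ≤ Sᵢ(t), Iᵢ(t), Rᵢ(t), Dᵢ(t) ≤ Ñᵢ (positive invariance of the region 𝒟). -/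
/-!
The total `Sᵢ + Iᵢ + Rᵢ + Dᵢ` has zero derivative, so it stays `Ñᵢ`. Each `Sᵢ` solves a scalar
linear equation `Sᵢ' = -λᵢ Sᵢ` and keeps its sign. Once `Sᵢ ≥ 0`, the pair `(I₁, I₂)` solves a
linear system whose off-diagonal coefficients `βᵢⱼ Sᵢ / Nⱼ` are nonnegative; for such a cooperative
system the sum `f` of the negative parts of the components has right Dini derivative at most
`K f`, and since `f 0 = 0` Grönwall's inequality forces `f ≡ 0`. Finally `Rᵢ` and `Dᵢ` are
nondecreasing, and the upper bounds follow from conservation.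
-/

open Filter Set Topology

theorem negPart_sub_negPart_le {α : Type*} [AddCommGroup α] [LinearOrder α]
    [IsOrderedAddMonoid α] (a b : α) : a⁻ - b⁻ ≤ (a - b)⁻ := by
  simp only [negPart_def]
  grind

theorem neg_mul_le_mul_negPart {α : Type*} [Ring α] [LinearOrder α] [IsOrderedRing α]
    {a y L : α} (ha : |a| ≤ L) (h : 0 ≤ a ∨ y ≤ 0) :
    -(a * y) ≤ L * y⁻ := by
  rcases h with ha0 | hy
  · calc -(a * y) = a * -y := (mul_neg a y).symm
      _ ≤ a * y⁻ := mul_le_mul_of_nonneg_left (neg_le_negPart y) ha0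
      _ ≤ L * y⁻ := mul_le_mul_of_nonneg_right ((le_abs_self a).trans ha) (negPart_nonneg y)
  · calc -(a * y) = a * y⁻ := by rw [negPart_eq_neg.2 hy, mul_neg]
      _ ≤ |a| * y⁻ := mul_le_mul_of_nonneg_right (le_abs_self a) (negPart_nonneg y)
      _ ≤ L * y⁻ := mul_le_mul_of_nonneg_right ha (negPart_nonneg y)

theorem eventually_slope_negPart_lt {x : ℝ → ℝ} {x' t B r : ℝ} (hx : HasDerivAt x x' t)
    (hB : 0 ≤ B) (h : x t ≤ 0 → -x' ≤ B) (hr : B < r) :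
    ∀ᶠ z in 𝓝[>] t, (z - t)⁻¹ * ((x z)⁻ - (x t)⁻) < r := by
  rcases lt_or_ge 0 (x t) with hpos | hnonpos
  · filter_upwards [nhdsWithin_le_nhds (hx.continuousAt.eventually (eventually_gt_nhds hpos))]
      with z hz
    rw [negPart_eq_zero.2 hz.le, negPart_eq_zero.2 hpos.le]
    linarith
  · have hslope : Tendsto (fun z => (z - t)⁻¹ * (x z - x t)) (𝓝[>] t) (𝓝 x') :=
      (hasDerivAt_iff_tendsto_slope.1 hx).mono_left
        (nhdsGT_le_nhdsNE t) |>.congr fun z => by rw [slope_def_field, div_eq_inv_mul]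
    filter_upwards [hslope.eventually (eventually_gt_nhds (by linarith [h hnonpos] : -r < x')),
      self_mem_nhdsWithin] with z hz hzt
    have hzt : 0 < z - t := sub_pos.2 hzt
    rw [lt_inv_mul_iff₀ hzt] at hz
    rw [inv_mul_lt_iff₀ hzt]
    calc (x z)⁻ - (x t)⁻ ≤ (x z - x t)⁻ := negPart_sub_negPart_le _ _
      _ < (z - t) * r := negPart_lt.2 ⟨by linarith, mul_pos hzt (by linarith)⟩

theorem frequently_slope_sum_negPart_lt {ι : Type*} [Fintype ι] {x : ι → ℝ → ℝ} {x' : ι → ℝ}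
    {t L r : ℝ} (hx : ∀ i, HasDerivAt (x i) (x' i) t) (hL : 0 ≤ L)
    (hx' : ∀ i, x i t ≤ 0 → -x' i ≤ L * ∑ j, (x j t)⁻)
    (hr : Fintype.card ι * L * ∑ j, (x j t)⁻ < r) :
    ∃ᶠ z in 𝓝[>] t, (z - t)⁻¹ * (∑ i, (x i z)⁻ - ∑ i, (x i t)⁻) < r := by
  set F := ∑ j, (x j t)⁻
  set δ := (r - Fintype.card ι * L * F) / (Fintype.card ι + 1)
  have hδ : (Fintype.card ι + 1) * δ = r - Fintype.card ι * L * F :=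
    mul_div_cancel₀ _ (by positivity)
  have hδ0 : 0 < δ := by positivity
  have hev : ∀ᶠ z in 𝓝[>] t, ∀ i, (z - t)⁻¹ * ((x i z)⁻ - (x i t)⁻) < L * F + δ :=
    eventually_all.2 fun i => eventually_slope_negPart_lt (hx i)
      (mul_nonneg hL (Finset.sum_nonneg fun j _ => negPart_nonneg _)) (hx' i)
      (lt_add_of_pos_right _ hδ0)
  refine hev.frequently.mono fun z hz => ?_
  calc (z - t)⁻¹ * (∑ i, (x i z)⁻ - F) = ∑ i, (z - t)⁻¹ * ((x i z)⁻ - (x i t)⁻) := by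
        rw [← Finset.sum_sub_distrib, Finset.mul_sum]
    _ ≤ ∑ _ : ι, (L * F + δ) := Finset.sum_le_sum fun i _ => (hz i).le
    _ = Fintype.card ι * L * F + Fintype.card ι * δ := by
        simp only [Finset.sum_const, Finset.card_univ, nsmul_eq_mul]; ring
    _ < r := by linarith

theorem nonneg_of_hasDerivAt_cooperative {ι : Type*} [Fintype ι] {x : ι → ℝ → ℝ}
    {A : ι → ι → ℝ → ℝ} (hx : ∀ i, ∀ t ≥ (0:ℝ), HasDerivAt (x i) (∑ j, A i j t * x j t) t)
    (hA : ∀ i j, ContinuousOn (A i j) (Ici 0))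
    (hA_nonneg : ∀ i j, i ≠ j → ∀ t ≥ (0:ℝ), 0 ≤ A i j t)
    (h0 : ∀ i, 0 ≤ x i 0) : ∀ t ≥ (0:ℝ), ∀ i, 0 ≤ x i t := by
  intro T hT
  obtain ⟨L, hL0, hL⟩ : ∃ L, 0 ≤ L ∧ ∀ t ∈ Icc 0 T, ∀ i j, |A i j t| ≤ L := by
    obtain ⟨C, hC⟩ := isCompact_Icc.exists_bound_of_continuousOn (f := fun t i j => A i j t)
      (continuousOn_pi.2 fun i => continuousOn_pi.2 fun j => (hA i j).mono Icc_subset_Ici_self)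
    exact ⟨max C 0, le_max_right _ _, fun t ht i j => (norm_le_pi_norm (fun j => A i j t) j).trans
      ((norm_le_pi_norm (fun i j => A i j t) i).trans ((hC t ht).trans (le_max_left _ _)))⟩
  set f : ℝ → ℝ := fun t => ∑ i, (x i t)⁻ with hf
  have hf_nonneg : ∀ t, 0 ≤ f t := fun t => Finset.sum_nonneg fun i _ => negPart_nonneg _
  have hf_cont : ContinuousOn f (Icc 0 T) := continuousOn_finsetSum _ fun i _ =>
    continuous_negPart.comp_continuousOn <| continuousOn_of_forall_continuousAt fun t ht =>
      (hx i t ht.1).continuousAt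
  have hderiv : ∀ t ∈ Ico 0 T, ∀ i, x i t ≤ 0 → -(∑ j, A i j t * x j t) ≤ L * f t := by
    intro t ht i hi
    rw [← Finset.sum_neg_distrib, hf, Finset.mul_sum]
    refine Finset.sum_le_sum fun j _ =>
      neg_mul_le_mul_negPart (hL t (Ico_subset_Icc_self ht) i j) ?_
    rcases eq_or_ne i j with rfl | hij
    · exact Or.inr hi
    · exact Or.inl (hA_nonneg i j hij t ht.1)
  have hf0 : f 0 ≤ 0 := (Finset.sum_eq_zero fun i _ => negPart_eq_zero.2 (h0 i)).le
  have hfT := le_gronwallBound_of_liminf_deriv_right_le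
    (f' := fun t => Fintype.card ι * L * f t) (K := Fintype.card ι * L) hf_cont
    (fun t ht _ hr => frequently_slope_sum_negPart_lt (fun i => hx i t ht.1) hL0 (hderiv t ht) hr)
    hf0 (fun t _ => (add_zero _).ge) T ⟨hT, le_rfl⟩
  rw [gronwallBound_ε0_δ0] at hfT
  intro i
  have hfT_zero := (Finset.sum_eq_zero_iff_of_nonneg fun i _ => negPart_nonneg (x i T)).1
    (le_antisymm hfT (hf_nonneg T))
  exact negPart_eq_zero.1 (hfT_zero i (Finset.mem_univ i))

theorem nonneg_of_hasDerivAt_cooperative_two {x y a b c d : ℝ → ℝ}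
    (hx : ∀ t ≥ (0:ℝ), HasDerivAt x (a t * x t + b t * y t) t)
    (hy : ∀ t ≥ (0:ℝ), HasDerivAt y (c t * x t + d t * y t) t)
    (ha : ContinuousOn a (Ici 0)) (hb : ContinuousOn b (Ici 0))
    (hc : ContinuousOn c (Ici 0)) (hd : ContinuousOn d (Ici 0))
    (hb_nonneg : ∀ t ≥ (0:ℝ), 0 ≤ b t) (hc_nonneg : ∀ t ≥ (0:ℝ), 0 ≤ c t)
    (hx0 : 0 ≤ x 0) (hy0 : 0 ≤ y 0) : ∀ t ≥ (0:ℝ), 0 ≤ x t ∧ 0 ≤ y t := by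
  have h := nonneg_of_hasDerivAt_cooperative (x := ![x, y]) (A := ![![a, b], ![c, d]])
    (by simpa [Fin.forall_fin_two] using ⟨hx, hy⟩)
    (by simpa [Fin.forall_fin_two] using ⟨⟨ha, hb⟩, hc, hd⟩)
    (by simpa [Fin.forall_fin_two] using ⟨hb_nonneg, hc_nonneg⟩)
    (by simpa [Fin.forall_fin_two] using ⟨hx0, hy0⟩)
  exact fun t ht => ⟨h t ht 0, h t ht 1⟩

theorem nonneg_of_hasDerivAt_mul {x a : ℝ → ℝ} (hx : ∀ t ≥ (0:ℝ), HasDerivAt x (a t * x t) t)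
    (ha : ContinuousOn a (Ici 0)) (h0 : 0 ≤ x 0) : ∀ t ≥ (0:ℝ), 0 ≤ x t := fun t ht =>
  nonneg_of_hasDerivAt_cooperative (ι := Unit) (x := fun _ => x) (A := fun _ _ => a)
    (by simpa using hx) (fun _ _ => ha) (fun i j hij => absurd (Subsingleton.elim i j) hij)
    (fun _ => h0) t ht ()

theorem le_of_hasDerivAt_nonneg {f f' : ℝ → ℝ} (hf : ∀ t ≥ (0:ℝ), HasDerivAt f (f' t) t)
    (hf' : ∀ t ≥ (0:ℝ), 0 ≤ f' t) : ∀ t ≥ (0:ℝ), f 0 ≤ f t := fun _ ht =>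
  monotoneOn_of_hasDerivWithinAt_nonneg (convex_Ici 0)
    (continuousOn_of_forall_continuousAt fun s hs => (hf s hs).continuousAt)
    (fun s hs => (hf s (interior_subset hs)).hasDerivWithinAt)
    (fun s hs => hf' s (interior_subset hs)) self_mem_Ici ht ht

theorem eq_of_hasDerivAt_zero {f : ℝ → ℝ} (hf : ∀ t ≥ (0:ℝ), HasDerivAt f 0 t) :
    ∀ t ≥ (0:ℝ), f t = f 0 := fun t ht =>
  constant_of_has_deriv_right_zero
    (continuousOn_of_forall_continuousAt fun s hs => (hf s hs.1).continuousAt)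
    (fun s hs => (hf s hs.1).hasDerivWithinAt) t ⟨ht, le_rfl⟩

theorem sird_group_mem_region {S I R D lam : ℝ → ℝ} {γ μ Ñ : ℝ} (hγ : 0 ≤ γ) (hμ : 0 ≤ μ)
    (hS : ∀ t ≥ (0:ℝ), HasDerivAt S (-(lam t) * S t) t)
    (hI : ∀ t ≥ (0:ℝ), HasDerivAt I (lam t * S t - (γ + μ) * I t) t)
    (hR : ∀ t ≥ (0:ℝ), HasDerivAt R (γ * I t) t) (hD : ∀ t ≥ (0:ℝ), HasDerivAt D (μ * I t) t)
    (hR0 : 0 ≤ R 0) (hD0 : 0 ≤ D 0) (hsum : S 0 + I 0 + R 0 + D 0 = Ñ)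
    (hS_nonneg : ∀ t ≥ (0:ℝ), 0 ≤ S t) (hI_nonneg : ∀ t ≥ (0:ℝ), 0 ≤ I t) :
    ∀ t ≥ (0:ℝ), S t + I t + R t + D t = Ñ ∧ (0 ≤ S t ∧ S t ≤ Ñ) ∧ (0 ≤ I t ∧ I t ≤ Ñ) ∧
      (0 ≤ R t ∧ R t ≤ Ñ) ∧ (0 ≤ D t ∧ D t ≤ Ñ) := by
  intro t ht
  have htotal : S t + I t + R t + D t = Ñ := hsum ▸ eq_of_hasDerivAt_zero
    (f := fun t => S t + I t + R t + D t)
    (fun s hs => ((((hS s hs).add (hI s hs)).add (hR s hs)).add (hD s hs)).congr_deriv (by ring))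
    t ht
  have hSt := hS_nonneg t ht
  have hIt := hI_nonneg t ht
  have hRt := hR0.trans <|
    le_of_hasDerivAt_nonneg hR (fun s hs => mul_nonneg hγ (hI_nonneg s hs)) t ht
  have hDt := hD0.trans <|
    le_of_hasDerivAt_nonneg hD (fun s hs => mul_nonneg hμ (hI_nonneg s hs)) t ht
  refine ⟨htotal, ⟨hSt, ?_⟩, ⟨hIt, ?_⟩, ⟨hRt, ?_⟩, ⟨hDt, ?_⟩⟩ <;> linarith

theorem stmt_0_general
    (β11 β12 β21 β22 γ1 γ2 μ1 μ2 : ℝ)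
    (hβ12 : 0 < β12) (hβ21 : 0 < β21)
    (hγ1 : 0 < γ1) (hγ2 : 0 < γ2) (hμ1 : 0 < μ1) (hμ2 : 0 < μ2)
    (S1 S2 I1 I2 R1 R2 D1 D2 N1 N2 : ℝ → ℝ)
    (hN1 : ∀ t, N1 t = S1 t + I1 t + R1 t)
    (hN2 : ∀ t, N2 t = S2 t + I2 t + R2 t)
    (hS1' : ∀ t ≥ (0:ℝ), HasDerivAt S1 (-(β11 * I1 t / N1 t + β12 * I2 t / N2 t) * S1 t) t)
    (hS2' : ∀ t ≥ (0:ℝ), HasDerivAt S2 (-(β21 * I1 t / N1 t + β22 * I2 t / N2 t) * S2 t) t)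
    (hI1' : ∀ t ≥ (0:ℝ), HasDerivAt I1 ((β11 * I1 t / N1 t + β12 * I2 t / N2 t) * S1 t - (γ1 + μ1) * I1 t) t)
    (hI2' : ∀ t ≥ (0:ℝ), HasDerivAt I2 ((β21 * I1 t / N1 t + β22 * I2 t / N2 t) * S2 t - (γ2 + μ2) * I2 t) t)
    (hR1' : ∀ t ≥ (0:ℝ), HasDerivAt R1 (γ1 * I1 t) t)
    (hR2' : ∀ t ≥ (0:ℝ), HasDerivAt R2 (γ2 * I2 t) t)
    (hD1' : ∀ t ≥ (0:ℝ), HasDerivAt D1 (μ1 * I1 t) t)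
    (hD2' : ∀ t ≥ (0:ℝ), HasDerivAt D2 (μ2 * I2 t) t)
    (hN1pos : ∀ t ≥ (0:ℝ), 0 < N1 t)
    (hN2pos : ∀ t ≥ (0:ℝ), 0 < N2 t)
    (Ntil1 Ntil2 : ℝ)
    (h0S1 : 0 ≤ S1 0) (h0I1 : 0 ≤ I1 0) (h0R1 : 0 ≤ R1 0) (h0D1 : 0 ≤ D1 0)
    (h0S2 : 0 ≤ S2 0) (h0I2 : 0 ≤ I2 0) (h0R2 : 0 ≤ R2 0) (h0D2 : 0 ≤ D2 0)
    (hsum1 : S1 0 + I1 0 + R1 0 + D1 0 = Ntil1)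
    (hsum2 : S2 0 + I2 0 + R2 0 + D2 0 = Ntil2) :
    ∀ t ≥ (0:ℝ),
      (S1 t + I1 t + R1 t + D1 t = Ntil1 ∧ S2 t + I2 t + R2 t + D2 t = Ntil2) ∧
      ((0 ≤ S1 t ∧ S1 t ≤ Ntil1) ∧ (0 ≤ I1 t ∧ I1 t ≤ Ntil1) ∧
       (0 ≤ R1 t ∧ R1 t ≤ Ntil1) ∧ (0 ≤ D1 t ∧ D1 t ≤ Ntil1)) ∧
      ((0 ≤ S2 t ∧ S2 t ≤ Ntil2) ∧ (0 ≤ I2 t ∧ I2 t ≤ Ntil2) ∧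
       (0 ≤ R2 t ∧ R2 t ≤ Ntil2) ∧ (0 ≤ D2 t ∧ D2 t ≤ Ntil2)) := by
  have hcont {f f' : ℝ → ℝ} (hf : ∀ t ≥ (0:ℝ), HasDerivAt f (f' t) t) : ContinuousOn f (Ici 0) :=
    continuousOn_of_forall_continuousAt fun t ht => (hf t ht).continuousAt
  have hN1c : ContinuousOn N1 (Ici 0) :=
    funext hN1 ▸ ((hcont hS1').add (hcont hI1')).add (hcont hR1')
  have hN2c : ContinuousOn N2 (Ici 0) :=
    funext hN2 ▸ ((hcont hS2').add (hcont hI2')).add (hcont hR2')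
  have hN1ne : ∀ t ∈ Ici (0:ℝ), N1 t ≠ 0 := fun t ht => (hN1pos t ht).ne'
  have hN2ne : ∀ t ∈ Ici (0:ℝ), N2 t ≠ 0 := fun t ht => (hN2pos t ht).ne'
  have hI1c := hcont hI1'
  have hI2c := hcont hI2'
  have hS1c := hcont hS1'
  have hS2c := hcont hS2'
  have hS1_nonneg := nonneg_of_hasDerivAt_mul hS1' (by fun_prop (disch := assumption)) h0S1
  have hS2_nonneg := nonneg_of_hasDerivAt_mul hS2' (by fun_prop (disch := assumption)) h0S2
  have hI_nonneg := nonneg_of_hasDerivAt_cooperative_two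
    (a := fun t => β11 * S1 t / N1 t - (γ1 + μ1)) (b := fun t => β12 * S1 t / N2 t)
    (c := fun t => β21 * S2 t / N1 t) (d := fun t => β22 * S2 t / N2 t - (γ2 + μ2))
    (fun t ht => (hI1' t ht).congr_deriv (by ring))
    (fun t ht => (hI2' t ht).congr_deriv (by ring))
    (by fun_prop (disch := assumption)) (by fun_prop (disch := assumption))
    (by fun_prop (disch := assumption)) (by fun_prop (disch := assumption))
    (fun t ht => div_nonneg (mul_nonneg hβ12.le (hS1_nonneg t ht)) (hN2pos t ht).le)
    (fun t ht => div_nonneg (mul_nonneg hβ21.le (hS2_nonneg t ht)) (hN1pos t ht).le) h0I1 h0I2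
  have hgroup1 := sird_group_mem_region hγ1.le hμ1.le hS1' hI1' hR1' hD1' h0R1 h0D1 hsum1
    hS1_nonneg (fun t ht => (hI_nonneg t ht).1)
  have hgroup2 := sird_group_mem_region hγ2.le hμ2.le hS2' hI2' hR2' hD2' h0R2 h0D2 hsum2
    hS2_nonneg (fun t ht => (hI_nonneg t ht).2)
  intro t ht
  exact ⟨⟨(hgroup1 t ht).1, (hgroup2 t ht).1⟩, (hgroup1 t ht).2, (hgroup2 t ht).2⟩

theorem stmt_0
    (β11 β12 β21 β22 γ1 γ2 μ1 μ2 : ℝ)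
    (hβ11 : 0 < β11) (hβ12 : 0 < β12) (hβ21 : 0 < β21) (hβ22 : 0 < β22)
    (hγ1 : 0 < γ1) (hγ2 : 0 < γ2) (hμ1 : 0 < μ1) (hμ2 : 0 < μ2)
    (S1 S2 I1 I2 R1 R2 D1 D2 N1 N2 : ℝ → ℝ)
    (hN1 : ∀ t, N1 t = S1 t + I1 t + R1 t)
    (hN2 : ∀ t, N2 t = S2 t + I2 t + R2 t)
    (hS1' : ∀ t ≥ (0:ℝ), HasDerivAt S1 (-(β11 * I1 t / N1 t + β12 * I2 t / N2 t) * S1 t) t)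
    (hS2' : ∀ t ≥ (0:ℝ), HasDerivAt S2 (-(β21 * I1 t / N1 t + β22 * I2 t / N2 t) * S2 t) t)
    (hI1' : ∀ t ≥ (0:ℝ), HasDerivAt I1 ((β11 * I1 t / N1 t + β12 * I2 t / N2 t) * S1 t - (γ1 + μ1) * I1 t) t)
    (hI2' : ∀ t ≥ (0:ℝ), HasDerivAt I2 ((β21 * I1 t / N1 t + β22 * I2 t / N2 t) * S2 t - (γ2 + μ2) * I2 t) t)
    (hR1' : ∀ t ≥ (0:ℝ), HasDerivAt R1 (γ1 * I1 t) t)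
    (hR2' : ∀ t ≥ (0:ℝ), HasDerivAt R2 (γ2 * I2 t) t)
    (hD1' : ∀ t ≥ (0:ℝ), HasDerivAt D1 (μ1 * I1 t) t)
    (hD2' : ∀ t ≥ (0:ℝ), HasDerivAt D2 (μ2 * I2 t) t)
    (hN1pos : ∀ t ≥ (0:ℝ), 0 < N1 t)
    (hN2pos : ∀ t ≥ (0:ℝ), 0 < N2 t)
    (Ntil1 Ntil2 : ℝ) (hNtil1 : 0 < Ntil1) (hNtil2 : 0 < Ntil2)
    (h0S1 : 0 ≤ S1 0) (h0I1 : 0 ≤ I1 0) (h0R1 : 0 ≤ R1 0) (h0D1 : 0 ≤ D1 0)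
    (h0S2 : 0 ≤ S2 0) (h0I2 : 0 ≤ I2 0) (h0R2 : 0 ≤ R2 0) (h0D2 : 0 ≤ D2 0)
    (hsum1 : S1 0 + I1 0 + R1 0 + D1 0 = Ntil1)
    (hsum2 : S2 0 + I2 0 + R2 0 + D2 0 = Ntil2) :
    ∀ t ≥ (0:ℝ),
      (S1 t + I1 t + R1 t + D1 t = Ntil1 ∧ S2 t + I2 t + R2 t + D2 t = Ntil2) ∧
      ((0 ≤ S1 t ∧ S1 t ≤ Ntil1) ∧ (0 ≤ I1 t ∧ I1 t ≤ Ntil1) ∧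
       (0 ≤ R1 t ∧ R1 t ≤ Ntil1) ∧ (0 ≤ D1 t ∧ D1 t ≤ Ntil1)) ∧
      ((0 ≤ S2 t ∧ S2 t ≤ Ntil2) ∧ (0 ≤ I2 t ∧ I2 t ≤ Ntil2) ∧
       (0 ≤ R2 t ∧ R2 t ≤ Ntil2) ∧ (0 ≤ D2 t ∧ D2 t ≤ Ntil2)) :=
  stmt_0_general β11 β12 β21 β22 γ1 γ2 μ1 μ2 hβ12 hβ21 hγ1 hγ2 hμ1 hμ2 S1 S2 I1 I2 R1 R2 D1 D2 N1 N2
    hN1 hN2 hS1' hS2' hI1' hI2' hR1' hR2' hD1' hD2' hN1pos hN2pos Ntil1 Ntil2 h0S1 h0I1 h0R1 h0D1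
    h0S2 h0I2 h0R2 h0D2 hsum1 hsum2
end

section
/- Let (S₁,S₂,I₁,I₂,R₁,R₂,D₁,D₂) be a solution of the two-group active-population SIRD model on [0,∞) with Nᵢ(t) > 0 for all t ≥ 0, with initial data Sᵢ(0) > 0, Iᵢ(0), Rᵢ(0), Dᵢ(0) ≥ 0, and suppose all compartments remain in [0, Ñᵢ] where Ñᵢ = Sᵢ(0)+Iᵢ(0)+Rᵢ(0)+Dᵢ(0). Then for each i = 1,2 the limits Sᵢ^∞ = lim_{t→∞} Sᵢ(t), Iᵢ^∞ = lim_{t→∞} Iᵢ(t), Rᵢ^∞ = lim_{t→∞} Rᵢ(t), and Dᵢ^∞ = lim_{t→∞} Dᵢ(t) all exist. -/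
/-!
The groups are coupled only through the force of infection `βᵢ₁ I₁/N₁ + βᵢ₂ I₂/N₂`, which is
nonnegative, so each group can be treated on its own. On `[0, ∞)` the susceptible class is then
nonincreasing and the removed and dead classes are nondecreasing; all are bounded, so they
converge by monotone convergence. The total `Sᵢ + Iᵢ + Rᵢ + Dᵢ` has zero derivative, hence is
constant, and `Iᵢ` converges as well.
-/

open Filter Set Topology

theorem exists_tendsto_of_hasDerivAt_nonneg_of_le {f f' : ℝ → ℝ} {C : ℝ}
    (hf : ∀ t ≥ 0, HasDerivAt f (f' t) t) (hf' : ∀ t ≥ 0, 0 ≤ f' t) (hC : ∀ t ≥ 0, f t ≤ C) :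
    ∃ l, Tendsto f atTop (𝓝 l) := by
  have hmono : MonotoneOn f (Ici 0) := by
    refine monotoneOn_of_hasDerivWithinAt_nonneg (convex_Ici 0)
      (fun t ht => (hf t ht).continuousAt.continuousWithinAt)
      (fun t ht => (hf t (interior_subset ht)).hasDerivWithinAt)
      (fun t ht => hf' t (interior_subset ht))
  set g : ℝ → ℝ := fun t => f (max t 0)
  have hg : Monotone g := fun a b hab =>
    hmono (le_max_right a 0) (le_max_right b 0) (max_le_max_right 0 hab)
  have hg_bdd : BddAbove (range g) := ⟨C, by rintro _ ⟨t, rfl⟩; exact hC _ (le_max_right t 0)⟩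
  refine ⟨_, (tendsto_atTop_ciSup hg hg_bdd).congr' ?_⟩
  filter_upwards [eventually_ge_atTop 0] with t ht
  simp only [g, max_eq_left ht]

theorem exists_tendsto_of_hasDerivAt_nonpos_of_ge {f f' : ℝ → ℝ} {C : ℝ}
    (hf : ∀ t ≥ 0, HasDerivAt f (f' t) t) (hf' : ∀ t ≥ 0, f' t ≤ 0) (hC : ∀ t ≥ 0, C ≤ f t) :
    ∃ l, Tendsto f atTop (𝓝 l) := by
  obtain ⟨l, hl⟩ := exists_tendsto_of_hasDerivAt_nonneg_of_le (C := -C)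
    (fun t ht => (hf t ht).neg) (fun t ht => neg_nonneg.2 (hf' t ht))
    (fun t ht => neg_le_neg (hC t ht))
  exact ⟨-l, by simpa using hl.neg⟩

theorem eq_of_hasDerivAt_zero_of_nonneg {f : ℝ → ℝ} (hf : ∀ t ≥ 0, HasDerivAt f 0 t) :
    ∀ t ≥ 0, f t = f 0 := fun t ht =>
  constant_of_has_deriv_right_zero
    (fun s hs => (hf s hs.1).continuousAt.continuousWithinAt)
    (fun s hs => (hf s hs.1).hasDerivWithinAt) t ⟨ht, le_rfl⟩

theorem SIRD.exists_tendsto {force S I R D : ℝ → ℝ} {γ μ C : ℝ} (hγ : 0 ≤ γ) (hμ : 0 ≤ μ)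
    (hforce : ∀ t ≥ 0, 0 ≤ force t)
    (hS' : ∀ t ≥ 0, HasDerivAt S (-force t * S t) t)
    (hI' : ∀ t ≥ 0, HasDerivAt I (force t * S t - (γ + μ) * I t) t)
    (hR' : ∀ t ≥ 0, HasDerivAt R (γ * I t) t)
    (hD' : ∀ t ≥ 0, HasDerivAt D (μ * I t) t)
    (hS : ∀ t ≥ 0, 0 ≤ S t) (hI : ∀ t ≥ 0, 0 ≤ I t)
    (hR : ∀ t ≥ 0, R t ≤ C) (hD : ∀ t ≥ 0, D t ≤ C) :
    (∃ l, Tendsto S atTop (𝓝 l)) ∧ (∃ l, Tendsto I atTop (𝓝 l)) ∧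
      (∃ l, Tendsto R atTop (𝓝 l)) ∧ (∃ l, Tendsto D atTop (𝓝 l)) := by
  obtain ⟨lS, hlS⟩ := exists_tendsto_of_hasDerivAt_nonpos_of_ge hS'
    (fun t ht => by nlinarith [hforce t ht, hS t ht]) hS
  obtain ⟨lR, hlR⟩ := exists_tendsto_of_hasDerivAt_nonneg_of_le hR'
    (fun t ht => mul_nonneg hγ (hI t ht)) hR
  obtain ⟨lD, hlD⟩ := exists_tendsto_of_hasDerivAt_nonneg_of_le hD'
    (fun t ht => mul_nonneg hμ (hI t ht)) hD
  have htotal : ∀ t ≥ 0, S t + I t + R t + D t = S 0 + I 0 + R 0 + D 0 :=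
    eq_of_hasDerivAt_zero_of_nonneg (f := fun t => S t + I t + R t + D t) fun t ht =>
      ((((hS' t ht).add (hI' t ht)).add (hR' t ht)).add (hD' t ht)).congr_deriv (by ring)
  have hlI : Tendsto I atTop (𝓝 (S 0 + I 0 + R 0 + D 0 - lS - lR - lD)) := by
    refine (((tendsto_const_nhds.sub hlS).sub hlR).sub hlD).congr' ?_
    filter_upwards [eventually_ge_atTop 0] with t ht
    linarith [htotal t ht]
  exact ⟨⟨lS, hlS⟩, ⟨_, hlI⟩, ⟨lR, hlR⟩, ⟨lD, hlD⟩⟩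

theorem stmt_1_general
    (β11 β12 β21 β22 γ1 γ2 μ1 μ2 : ℝ)
    (hβ11 : 0 < β11) (hβ12 : 0 < β12) (hβ21 : 0 < β21) (hβ22 : 0 < β22)
    (hγ1 : 0 < γ1) (hγ2 : 0 < γ2) (hμ1 : 0 < μ1) (hμ2 : 0 < μ2)
    (S1 S2 I1 I2 R1 R2 D1 D2 N1 N2 : ℝ → ℝ)
    (hS1' : ∀ t ≥ (0:ℝ), HasDerivAt S1 (-(β11 * I1 t / N1 t + β12 * I2 t / N2 t) * S1 t) t)
    (hS2' : ∀ t ≥ (0:ℝ), HasDerivAt S2 (-(β21 * I1 t / N1 t + β22 * I2 t / N2 t) * S2 t) t)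
    (hI1' : ∀ t ≥ (0:ℝ), HasDerivAt I1 ((β11 * I1 t / N1 t + β12 * I2 t / N2 t) * S1 t - (γ1 + μ1) * I1 t) t)
    (hI2' : ∀ t ≥ (0:ℝ), HasDerivAt I2 ((β21 * I1 t / N1 t + β22 * I2 t / N2 t) * S2 t - (γ2 + μ2) * I2 t) t)
    (hR1' : ∀ t ≥ (0:ℝ), HasDerivAt R1 (γ1 * I1 t) t)
    (hR2' : ∀ t ≥ (0:ℝ), HasDerivAt R2 (γ2 * I2 t) t)
    (hD1' : ∀ t ≥ (0:ℝ), HasDerivAt D1 (μ1 * I1 t) t)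
    (hD2' : ∀ t ≥ (0:ℝ), HasDerivAt D2 (μ2 * I2 t) t)
    (hN1pos : ∀ t ≥ (0:ℝ), 0 < N1 t)
    (hN2pos : ∀ t ≥ (0:ℝ), 0 < N2 t)
    (hbox1 : ∀ t ≥ (0:ℝ), (0 ≤ S1 t ∧ S1 t ≤ S1 0 + I1 0 + R1 0 + D1 0) ∧
      (0 ≤ I1 t ∧ I1 t ≤ S1 0 + I1 0 + R1 0 + D1 0) ∧
      (0 ≤ R1 t ∧ R1 t ≤ S1 0 + I1 0 + R1 0 + D1 0) ∧
      (0 ≤ D1 t ∧ D1 t ≤ S1 0 + I1 0 + R1 0 + D1 0))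
    (hbox2 : ∀ t ≥ (0:ℝ), (0 ≤ S2 t ∧ S2 t ≤ S2 0 + I2 0 + R2 0 + D2 0) ∧
      (0 ≤ I2 t ∧ I2 t ≤ S2 0 + I2 0 + R2 0 + D2 0) ∧
      (0 ≤ R2 t ∧ R2 t ≤ S2 0 + I2 0 + R2 0 + D2 0) ∧
      (0 ≤ D2 t ∧ D2 t ≤ S2 0 + I2 0 + R2 0 + D2 0))
    :
    ((∃ l : ℝ, Tendsto S1 atTop (nhds l)) ∧ (∃ l : ℝ, Tendsto I1 atTop (nhds l)) ∧
     (∃ l : ℝ, Tendsto R1 atTop (nhds l)) ∧ (∃ l : ℝ, Tendsto D1 atTop (nhds l))) ∧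
    ((∃ l : ℝ, Tendsto S2 atTop (nhds l)) ∧ (∃ l : ℝ, Tendsto I2 atTop (nhds l)) ∧
     (∃ l : ℝ, Tendsto R2 atTop (nhds l)) ∧ (∃ l : ℝ, Tendsto D2 atTop (nhds l))) := by
  have force_nonneg : ∀ {a b : ℝ}, 0 < a → 0 < b →
      ∀ t ≥ (0:ℝ), 0 ≤ a * I1 t / N1 t + b * I2 t / N2 t := fun ha hb t ht => by
    have := (hbox1 t ht).2.1.1
    have := (hbox2 t ht).2.1.1
    have := hN1pos t ht
    have := hN2pos t ht
    positivity
  exact ⟨SIRD.exists_tendsto hγ1.le hμ1.le (force_nonneg hβ11 hβ12) hS1' hI1' hR1' hD1'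
      (fun t ht => (hbox1 t ht).1.1) (fun t ht => (hbox1 t ht).2.1.1)
      (fun t ht => (hbox1 t ht).2.2.1.2) (fun t ht => (hbox1 t ht).2.2.2.2),
    SIRD.exists_tendsto hγ2.le hμ2.le (force_nonneg hβ21 hβ22) hS2' hI2' hR2' hD2'
      (fun t ht => (hbox2 t ht).1.1) (fun t ht => (hbox2 t ht).2.1.1)
      (fun t ht => (hbox2 t ht).2.2.1.2) (fun t ht => (hbox2 t ht).2.2.2.2)⟩

theorem stmt_1
    (β11 β12 β21 β22 γ1 γ2 μ1 μ2 : ℝ)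
    (hβ11 : 0 < β11) (hβ12 : 0 < β12) (hβ21 : 0 < β21) (hβ22 : 0 < β22)
    (hγ1 : 0 < γ1) (hγ2 : 0 < γ2) (hμ1 : 0 < μ1) (hμ2 : 0 < μ2)
    (S1 S2 I1 I2 R1 R2 D1 D2 N1 N2 : ℝ → ℝ)
    (hN1 : ∀ t, N1 t = S1 t + I1 t + R1 t)
    (hN2 : ∀ t, N2 t = S2 t + I2 t + R2 t)
    (hS1' : ∀ t ≥ (0:ℝ), HasDerivAt S1 (-(β11 * I1 t / N1 t + β12 * I2 t / N2 t) * S1 t) t)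
    (hS2' : ∀ t ≥ (0:ℝ), HasDerivAt S2 (-(β21 * I1 t / N1 t + β22 * I2 t / N2 t) * S2 t) t)
    (hI1' : ∀ t ≥ (0:ℝ), HasDerivAt I1 ((β11 * I1 t / N1 t + β12 * I2 t / N2 t) * S1 t - (γ1 + μ1) * I1 t) t)
    (hI2' : ∀ t ≥ (0:ℝ), HasDerivAt I2 ((β21 * I1 t / N1 t + β22 * I2 t / N2 t) * S2 t - (γ2 + μ2) * I2 t) t)
    (hR1' : ∀ t ≥ (0:ℝ), HasDerivAt R1 (γ1 * I1 t) t)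
    (hR2' : ∀ t ≥ (0:ℝ), HasDerivAt R2 (γ2 * I2 t) t)
    (hD1' : ∀ t ≥ (0:ℝ), HasDerivAt D1 (μ1 * I1 t) t)
    (hD2' : ∀ t ≥ (0:ℝ), HasDerivAt D2 (μ2 * I2 t) t)
    (hN1pos : ∀ t ≥ (0:ℝ), 0 < N1 t)
    (hN2pos : ∀ t ≥ (0:ℝ), 0 < N2 t)
    (hS10 : 0 < S1 0) (hS20 : 0 < S2 0)
    (hI10 : 0 ≤ I1 0) (hI20 : 0 ≤ I2 0)
    (hR10 : 0 ≤ R1 0) (hR20 : 0 ≤ R2 0)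
    (hD10 : 0 ≤ D1 0) (hD20 : 0 ≤ D2 0)
    (hbox1 : ∀ t ≥ (0:ℝ), (0 ≤ S1 t ∧ S1 t ≤ S1 0 + I1 0 + R1 0 + D1 0) ∧
      (0 ≤ I1 t ∧ I1 t ≤ S1 0 + I1 0 + R1 0 + D1 0) ∧
      (0 ≤ R1 t ∧ R1 t ≤ S1 0 + I1 0 + R1 0 + D1 0) ∧
      (0 ≤ D1 t ∧ D1 t ≤ S1 0 + I1 0 + R1 0 + D1 0))
    (hbox2 : ∀ t ≥ (0:ℝ), (0 ≤ S2 t ∧ S2 t ≤ S2 0 + I2 0 + R2 0 + D2 0) ∧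
      (0 ≤ I2 t ∧ I2 t ≤ S2 0 + I2 0 + R2 0 + D2 0) ∧
      (0 ≤ R2 t ∧ R2 t ≤ S2 0 + I2 0 + R2 0 + D2 0) ∧
      (0 ≤ D2 t ∧ D2 t ≤ S2 0 + I2 0 + R2 0 + D2 0))
    :
    ((∃ l : ℝ, Tendsto S1 atTop (nhds l)) ∧ (∃ l : ℝ, Tendsto I1 atTop (nhds l)) ∧
     (∃ l : ℝ, Tendsto R1 atTop (nhds l)) ∧ (∃ l : ℝ, Tendsto D1 atTop (nhds l))) ∧
    ((∃ l : ℝ, Tendsto S2 atTop (nhds l)) ∧ (∃ l : ℝ, Tendsto I2 atTop (nhds l)) ∧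
     (∃ l : ℝ, Tendsto R2 atTop (nhds l)) ∧ (∃ l : ℝ, Tendsto D2 atTop (nhds l))) :=
  stmt_1_general β11 β12 β21 β22 γ1 γ2 μ1 μ2 hβ11 hβ12 hβ21 hβ22 hγ1 hγ2 hμ1 hμ2 S1 S2 I1 I2 R1 R2
    D1 D2 N1 N2 hS1' hS2' hI1' hI2' hR1' hR2' hD1' hD2' hN1pos hN2pos hbox1 hbox2
end

section
/- Let (S₁,S₂,I₁,I₂,R₁,R₂,D₁,D₂) be a solution of the two-group active-population SIRD model on [0,∞) with Nᵢ(t) > 0 for all t ≥ 0, with initial data Sᵢ(0) > 0, Iᵢ(0), Rᵢ(0), Dᵢ(0) ≥ 0, and suppose all compartments remain in [0, Ñᵢ] where Ñᵢ = Sᵢ(0)+Iᵢ(0)+Rᵢ(0)+Dᵢ(0). Then I₁(t) → 0 and I₂(t) → 0 as t → ∞; in particular the infectious compartments vanish in the limit. -/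
/-!
Each infectious class `I` is nonnegative and, since every compartment stays in a bounded box,
has bounded derivative, so it is Lipschitz. Its deaths `D` satisfy `D' = μ I ≥ 0` and are bounded,
so `D` converges. Barbalat's lemma then forces `I → 0`: for a `K`-Lipschitz `f = g'` one has
`|g (t + δ) - g t - δ f t| ≤ K δ²`, so once the increments of the convergent `g` are small,
`|f t| ≲ K δ` for every `δ > 0`.
-/

open Filter Set Topology NNReal

theorem abs_sub_sub_mul_le_of_lipschitzOnWith {f g : ℝ → ℝ} {a t δ : ℝ} {K : ℝ≥0}
    (hg : ∀ s ≥ a, HasDerivAt g (f s) s) (hf : LipschitzOnWith K f (Ici a))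
    (ht : a ≤ t) (hδ : 0 ≤ δ) :
    |g (t + δ) - g t - δ * f t| ≤ K * δ ^ 2 := by
  have hderiv : ∀ s ∈ Icc t (t + δ),
      HasDerivWithinAt (fun s => g s - s * f t) (f s - f t) (Icc t (t + δ)) s := fun s hs =>
    ((hg s (ht.trans hs.1)).sub (hasDerivAt_mul_const (f t))).hasDerivWithinAt
  have hbound : ∀ s ∈ Icc t (t + δ), ‖f s - f t‖ ≤ K * δ := by
    intro s hs
    calc ‖f s - f t‖ = dist (f s) (f t) := rfl
      _ ≤ K * dist s t := hf.dist_le_mul s (ht.trans hs.1) t ht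
      _ ≤ K * δ := by
        gcongr
        rw [Real.dist_eq, abs_of_nonneg (by linarith [hs.1])]
        linarith [hs.2]
  have := (convex_Icc t (t + δ)).norm_image_sub_le_of_norm_hasDerivWithin_le hderiv hbound
    (left_mem_Icc.mpr (by linarith)) (right_mem_Icc.mpr (by linarith))
  rw [Real.norm_eq_abs, Real.norm_eq_abs, add_sub_cancel_left, abs_of_nonneg hδ] at this
  calc |g (t + δ) - g t - δ * f t| = |g (t + δ) - (t + δ) * f t - (g t - t * f t)| := by ring_nf
    _ ≤ K * δ * δ := this
    _ = K * δ ^ 2 := by ring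

theorem tendsto_zero_of_hasDerivAt_of_tendsto {f g : ℝ → ℝ} {a L : ℝ} {K : ℝ≥0}
    (hg : ∀ s ≥ a, HasDerivAt g (f s) s) (hf : LipschitzOnWith K f (Ici a))
    (hgL : Tendsto g atTop (𝓝 L)) : Tendsto f atTop (𝓝 0) := by
  rw [Metric.tendsto_atTop]
  intro ε hε
  set δ := ε / (2 * (K + 1)) with hδ_def
  have hδ : 0 < δ := by positivity
  have hKδ : K * δ ≤ ε / 2 := by
    rw [hδ_def, mul_div_assoc', div_le_div_iff₀ (by positivity) two_pos]
    nlinarith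
  have hincr : Tendsto (fun t => g (t + δ) - g t) atTop (𝓝 0) := by
    simpa using (hgL.comp (tendsto_atTop_add_const_right _ δ tendsto_id)).sub hgL
  obtain ⟨T, hT⟩ := Metric.tendsto_atTop.mp hincr (δ * (ε / 2)) (by positivity)
  refine ⟨max T a, fun t ht => ?_⟩
  have hgt := hT t (le_of_max_le_left ht)
  rw [Real.dist_eq, sub_zero] at hgt ⊢
  have hest := abs_sub_sub_mul_le_of_lipschitzOnWith hg hf (le_of_max_le_right ht) hδ.le
  have : δ * |f t| < δ * ε := by
    calc δ * |f t| = |(g (t + δ) - g t) - (g (t + δ) - g t - δ * f t)| := by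
          rw [sub_sub_cancel, abs_mul, abs_of_pos hδ]
      _ ≤ |g (t + δ) - g t| + |g (t + δ) - g t - δ * f t| := abs_sub _ _
      _ < δ * (ε / 2) + δ * (K * δ) := by nlinarith
      _ ≤ δ * ε := by nlinarith
  exact lt_of_mul_lt_mul_left this hδ.le

theorem exists_tendsto_of_hasDerivAt_nonneg_of_le_s2 {g φ : ℝ → ℝ} {a M : ℝ}
    (hg : ∀ t ≥ a, HasDerivAt g (φ t) t) (hφ : ∀ t ≥ a, 0 ≤ φ t) (hgM : ∀ t ≥ a, g t ≤ M) :
    ∃ L, Tendsto g atTop (𝓝 L) := by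
  have hmono : MonotoneOn g (Ici a) :=
    monotoneOn_of_hasDerivWithinAt_nonneg (convex_Ici a)
      (fun t ht => (hg t ht).continuousAt.continuousWithinAt)
      (fun t ht => (hg t (interior_subset ht)).hasDerivWithinAt)
      (fun t ht => hφ t (interior_subset ht))
  have hmono' : Monotone fun t => g (max t a) := fun s t hst =>
    hmono (le_max_right s a) (le_max_right t a) (max_le_max_right a hst)
  have hbdd : BddAbove (range fun t => g (max t a)) :=
    ⟨M, by rintro _ ⟨t, rfl⟩; exact hgM _ (le_max_right t a)⟩
  refine ⟨_, (tendsto_atTop_ciSup hmono' hbdd).congr' ?_⟩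
  filter_upwards [eventually_ge_atTop a] with t ht
  rw [max_eq_left ht]

theorem tendsto_zero_of_abs_deriv_le_of_antideriv_le {f f' g : ℝ → ℝ} {a K M : ℝ}
    (hf : ∀ t ≥ a, HasDerivAt f (f' t) t) (hf' : ∀ t ≥ a, |f' t| ≤ K)
    (hf0 : ∀ t ≥ a, 0 ≤ f t) (hg : ∀ t ≥ a, HasDerivAt g (f t) t) (hgM : ∀ t ≥ a, g t ≤ M) :
    Tendsto f atTop (𝓝 0) := by
  have hlip : LipschitzOnWith K.toNNReal f (Ici a) :=
    (convex_Ici a).lipschitzOnWith_of_nnnorm_hasDerivWithin_le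
      (fun t ht => (hf t ht).hasDerivWithinAt)
      fun t ht => by
        rw [← NNReal.coe_le_coe, coe_nnnorm, Real.coe_toNNReal']
        exact (hf' t ht).trans (le_max_left K 0)
  obtain ⟨L, hL⟩ := exists_tendsto_of_hasDerivAt_nonneg_of_le_s2 hg hf0 hgM
  exact tendsto_zero_of_hasDerivAt_of_tendsto hg hlip hL

theorem abs_mul_div_le_abs {β x y : ℝ} (hx : 0 ≤ x) (hxy : x ≤ y) : |β * x / y| ≤ |β| := by
  rw [mul_div_assoc, abs_mul, abs_of_nonneg (div_nonneg hx (hx.trans hxy))]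
  exact mul_le_of_le_one_right (abs_nonneg β) (div_le_one_of_le₀ hxy (hx.trans hxy))

theorem tendsto_infected_zero {β₁ β₂ κ μ a M : ℝ} {S I D I₁ I₂ N₁ N₂ : ℝ → ℝ} (hμ : 0 < μ)
    (hI' : ∀ t ≥ a, HasDerivAt I ((β₁ * I₁ t / N₁ t + β₂ * I₂ t / N₂ t) * S t - κ * I t) t)
    (hD' : ∀ t ≥ a, HasDerivAt D (μ * I t) t)
    (hI₁ : ∀ t ≥ a, 0 ≤ I₁ t ∧ I₁ t ≤ N₁ t) (hI₂ : ∀ t ≥ a, 0 ≤ I₂ t ∧ I₂ t ≤ N₂ t)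
    (hS : ∀ t ≥ a, 0 ≤ S t ∧ S t ≤ M) (hI : ∀ t ≥ a, 0 ≤ I t ∧ I t ≤ M)
    (hD : ∀ t ≥ a, D t ≤ M) :
    Tendsto I atTop (𝓝 0) := by
  have hbound : ∀ t ≥ a,
      |(β₁ * I₁ t / N₁ t + β₂ * I₂ t / N₂ t) * S t - κ * I t| ≤ (|β₁| + |β₂| + |κ|) * M := by
    intro t ht
    obtain ⟨hS0, hSM⟩ := hS t ht
    obtain ⟨hI0, hIM⟩ := hI t ht
    have hforce : |β₁ * I₁ t / N₁ t + β₂ * I₂ t / N₂ t| ≤ |β₁| + |β₂| :=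
      (abs_add_le (β₁ * I₁ t / N₁ t) _).trans <| add_le_add
        (abs_mul_div_le_abs (hI₁ t ht).1 (hI₁ t ht).2) (abs_mul_div_le_abs (hI₂ t ht).1 (hI₂ t ht).2)
    calc _ ≤ |(β₁ * I₁ t / N₁ t + β₂ * I₂ t / N₂ t) * S t| + |κ * I t| := abs_sub _ _
      _ = |β₁ * I₁ t / N₁ t + β₂ * I₂ t / N₂ t| * S t + |κ| * I t := by
        rw [abs_mul, abs_mul, abs_of_nonneg hS0, abs_of_nonneg hI0]
      _ ≤ (|β₁| + |β₂|) * M + |κ| * M := by gcongr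
      _ = (|β₁| + |β₂| + |κ|) * M := by ring
  have hDμ : ∀ t ≥ a, HasDerivAt (fun s => D s / μ) (I t) t := fun t ht => by
    simpa [mul_div_cancel_left₀ _ hμ.ne'] using (hD' t ht).div_const μ
  exact tendsto_zero_of_abs_deriv_le_of_antideriv_le hI' hbound (fun t ht => (hI t ht).1) hDμ
    (fun t ht => div_le_div_of_nonneg_right (hD t ht) hμ.le)

theorem stmt_2_general
    (β11 β12 β21 β22 γ1 γ2 μ1 μ2 : ℝ)
    (hμ1 : 0 < μ1) (hμ2 : 0 < μ2)
    (S1 S2 I1 I2 R1 R2 D1 D2 N1 N2 : ℝ → ℝ)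
    (hN1 : ∀ t, N1 t = S1 t + I1 t + R1 t)
    (hN2 : ∀ t, N2 t = S2 t + I2 t + R2 t)
    (hI1' : ∀ t ≥ (0:ℝ), HasDerivAt I1 ((β11 * I1 t / N1 t + β12 * I2 t / N2 t) * S1 t - (γ1 + μ1) * I1 t) t)
    (hI2' : ∀ t ≥ (0:ℝ), HasDerivAt I2 ((β21 * I1 t / N1 t + β22 * I2 t / N2 t) * S2 t - (γ2 + μ2) * I2 t) t)
    (hD1' : ∀ t ≥ (0:ℝ), HasDerivAt D1 (μ1 * I1 t) t)
    (hD2' : ∀ t ≥ (0:ℝ), HasDerivAt D2 (μ2 * I2 t) t)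
    (hbox1 : ∀ t ≥ (0:ℝ), (0 ≤ S1 t ∧ S1 t ≤ S1 0 + I1 0 + R1 0 + D1 0) ∧
      (0 ≤ I1 t ∧ I1 t ≤ S1 0 + I1 0 + R1 0 + D1 0) ∧
      (0 ≤ R1 t ∧ R1 t ≤ S1 0 + I1 0 + R1 0 + D1 0) ∧
      (0 ≤ D1 t ∧ D1 t ≤ S1 0 + I1 0 + R1 0 + D1 0))
    (hbox2 : ∀ t ≥ (0:ℝ), (0 ≤ S2 t ∧ S2 t ≤ S2 0 + I2 0 + R2 0 + D2 0) ∧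
      (0 ≤ I2 t ∧ I2 t ≤ S2 0 + I2 0 + R2 0 + D2 0) ∧
      (0 ≤ R2 t ∧ R2 t ≤ S2 0 + I2 0 + R2 0 + D2 0) ∧
      (0 ≤ D2 t ∧ D2 t ≤ S2 0 + I2 0 + R2 0 + D2 0))
    :
    Tendsto I1 atTop (nhds 0) ∧ Tendsto I2 atTop (nhds 0) := by
  have hI1N : ∀ t ≥ (0:ℝ), 0 ≤ I1 t ∧ I1 t ≤ N1 t := fun t ht => by
    obtain ⟨⟨hS, -⟩, ⟨hI, -⟩, ⟨hR, -⟩, -⟩ := hbox1 t ht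
    exact ⟨hI, by rw [hN1]; linarith⟩
  have hI2N : ∀ t ≥ (0:ℝ), 0 ≤ I2 t ∧ I2 t ≤ N2 t := fun t ht => by
    obtain ⟨⟨hS, -⟩, ⟨hI, -⟩, ⟨hR, -⟩, -⟩ := hbox2 t ht
    exact ⟨hI, by rw [hN2]; linarith⟩
  exact ⟨tendsto_infected_zero hμ1 hI1' hD1' hI1N hI2N (fun t ht => (hbox1 t ht).1)
      (fun t ht => (hbox1 t ht).2.1) (fun t ht => (hbox1 t ht).2.2.2.2),
    tendsto_infected_zero hμ2 hI2' hD2' hI1N hI2N (fun t ht => (hbox2 t ht).1)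
      (fun t ht => (hbox2 t ht).2.1) (fun t ht => (hbox2 t ht).2.2.2.2)⟩

theorem stmt_2
    (β11 β12 β21 β22 γ1 γ2 μ1 μ2 : ℝ)
    (hβ11 : 0 < β11) (hβ12 : 0 < β12) (hβ21 : 0 < β21) (hβ22 : 0 < β22)
    (hγ1 : 0 < γ1) (hγ2 : 0 < γ2) (hμ1 : 0 < μ1) (hμ2 : 0 < μ2)
    (S1 S2 I1 I2 R1 R2 D1 D2 N1 N2 : ℝ → ℝ)
    (hN1 : ∀ t, N1 t = S1 t + I1 t + R1 t)
    (hN2 : ∀ t, N2 t = S2 t + I2 t + R2 t)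
    (hS1' : ∀ t ≥ (0:ℝ), HasDerivAt S1 (-(β11 * I1 t / N1 t + β12 * I2 t / N2 t) * S1 t) t)
    (hS2' : ∀ t ≥ (0:ℝ), HasDerivAt S2 (-(β21 * I1 t / N1 t + β22 * I2 t / N2 t) * S2 t) t)
    (hI1' : ∀ t ≥ (0:ℝ), HasDerivAt I1 ((β11 * I1 t / N1 t + β12 * I2 t / N2 t) * S1 t - (γ1 + μ1) * I1 t) t)
    (hI2' : ∀ t ≥ (0:ℝ), HasDerivAt I2 ((β21 * I1 t / N1 t + β22 * I2 t / N2 t) * S2 t - (γ2 + μ2) * I2 t) t)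
    (hR1' : ∀ t ≥ (0:ℝ), HasDerivAt R1 (γ1 * I1 t) t)
    (hR2' : ∀ t ≥ (0:ℝ), HasDerivAt R2 (γ2 * I2 t) t)
    (hD1' : ∀ t ≥ (0:ℝ), HasDerivAt D1 (μ1 * I1 t) t)
    (hD2' : ∀ t ≥ (0:ℝ), HasDerivAt D2 (μ2 * I2 t) t)
    (hN1pos : ∀ t ≥ (0:ℝ), 0 < N1 t)
    (hN2pos : ∀ t ≥ (0:ℝ), 0 < N2 t)
    (hS10 : 0 < S1 0) (hS20 : 0 < S2 0)
    (hI10 : 0 ≤ I1 0) (hI20 : 0 ≤ I2 0)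
    (hR10 : 0 ≤ R1 0) (hR20 : 0 ≤ R2 0)
    (hD10 : 0 ≤ D1 0) (hD20 : 0 ≤ D2 0)
    (hbox1 : ∀ t ≥ (0:ℝ), (0 ≤ S1 t ∧ S1 t ≤ S1 0 + I1 0 + R1 0 + D1 0) ∧
      (0 ≤ I1 t ∧ I1 t ≤ S1 0 + I1 0 + R1 0 + D1 0) ∧
      (0 ≤ R1 t ∧ R1 t ≤ S1 0 + I1 0 + R1 0 + D1 0) ∧
      (0 ≤ D1 t ∧ D1 t ≤ S1 0 + I1 0 + R1 0 + D1 0))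
    (hbox2 : ∀ t ≥ (0:ℝ), (0 ≤ S2 t ∧ S2 t ≤ S2 0 + I2 0 + R2 0 + D2 0) ∧
      (0 ≤ I2 t ∧ I2 t ≤ S2 0 + I2 0 + R2 0 + D2 0) ∧
      (0 ≤ R2 t ∧ R2 t ≤ S2 0 + I2 0 + R2 0 + D2 0) ∧
      (0 ≤ D2 t ∧ D2 t ≤ S2 0 + I2 0 + R2 0 + D2 0))
    :
    Tendsto I1 atTop (nhds 0) ∧ Tendsto I2 atTop (nhds 0) :=
  stmt_2_general β11 β12 β21 β22 γ1 γ2 μ1 μ2 hμ1 hμ2 S1 S2 I1 I2 R1 R2 D1 D2 N1 N2 hN1 hN2 hI1' hI2'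
    hD1' hD2' hbox1 hbox2
end

section
/- Let (S₁,S₂,I₁,I₂,R₁,R₂,D₁,D₂) be a solution of the two-group active-population SIRD model on [0,∞) with Nᵢ(t) > 0 for all t ≥ 0, with initial data Sᵢ(0) > 0, Iᵢ(0), Rᵢ(0), Dᵢ(0) ≥ 0, all compartments remaining in [0, Ñᵢ] where Ñᵢ = Sᵢ(0)+Iᵢ(0)+Rᵢ(0)+Dᵢ(0), and suppose the limits Sᵢ^∞, Iᵢ^∞, Rᵢ^∞, Dᵢ^∞ of the compartments as t → ∞ exist with Iᵢ^∞ = 0. Then for each i = 1,2: (i) Sᵢ^∞ = Ñᵢ − Rᵢ^∞ − Dᵢ^∞; (ii) Rᵢ^∞ = (γᵢ/(γᵢ+μᵢ))·(Sᵢ(0)+Iᵢ(0)−Sᵢ^∞) + Rᵢ(0); (iii) Dᵢ^∞ = (μᵢ/(γᵢ+μᵢ))·(Sᵢ(0)+Iᵢ(0)−Sᵢ^∞) + Dᵢ(0). -/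
/-!
The total `S + I + R + D` of each group is conserved, and so is `μ R - γ D`, since recovery and
death both draw on `I` in the fixed ratio `γ : μ`. Passing to the limit with `I → 0` turns these
two conservation laws into linear equations for the limits, which solve to the three formulas.
The groups are coupled only through the force of infection, which cancels in `S' + I'`, so the
argument runs group by group.
-/

open Filter Topology

lemma eq_of_hasDerivAt_zero_of_tendsto {f : ℝ → ℝ} {a L : ℝ}
    (hf : ∀ t ≥ a, HasDerivAt f 0 t) (hL : Tendsto f atTop (𝓝 L)) : L = f a := by
  have hconst : ∀ t ≥ a, f t = f a := fun t ht =>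
    constant_of_has_deriv_right_zero (fun x hx => (hf x hx.1).continuousAt.continuousWithinAt)
      (fun x hx => (hf x hx.1).hasDerivWithinAt) t ⟨ht, le_rfl⟩
  refine tendsto_nhds_unique hL (tendsto_const_nhds.congr' ?_)
  filter_upwards [eventually_ge_atTop a] with t ht using (hconst t ht).symm

lemma sird_limits_eq {γ μ : ℝ} (hγμ : γ + μ ≠ 0) {S I R D force : ℝ → ℝ}
    (hS' : ∀ t ≥ (0:ℝ), HasDerivAt S (-(force t) * S t) t)
    (hI' : ∀ t ≥ (0:ℝ), HasDerivAt I (force t * S t - (γ + μ) * I t) t)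
    (hR' : ∀ t ≥ (0:ℝ), HasDerivAt R (γ * I t) t)
    (hD' : ∀ t ≥ (0:ℝ), HasDerivAt D (μ * I t) t)
    {Sinf Rinf Dinf : ℝ}
    (hS : Tendsto S atTop (𝓝 Sinf)) (hI : Tendsto I atTop (𝓝 0))
    (hR : Tendsto R atTop (𝓝 Rinf)) (hD : Tendsto D atTop (𝓝 Dinf)) :
    Sinf = (S 0 + I 0 + R 0 + D 0) - Rinf - Dinf ∧
    Rinf = γ / (γ + μ) * (S 0 + I 0 - Sinf) + R 0 ∧
    Dinf = μ / (γ + μ) * (S 0 + I 0 - Sinf) + D 0 := by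
  have total : Sinf + 0 + Rinf + Dinf = S 0 + I 0 + R 0 + D 0 :=
    eq_of_hasDerivAt_zero_of_tendsto (f := fun t => S t + I t + R t + D t) (fun t ht =>
      ((((hS' t ht).add (hI' t ht)).add (hR' t ht)).add (hD' t ht)).congr_deriv (by ring))
      (((hS.add hI).add hR).add hD)
  have recovered_dead_balance : μ * Rinf - γ * Dinf = μ * R 0 - γ * D 0 :=
    eq_of_hasDerivAt_zero_of_tendsto (f := fun t => μ * R t - γ * D t) (fun t ht =>
      (((hR' t ht).const_mul μ).sub ((hD' t ht).const_mul γ)).congr_deriv (by ring))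
      ((hR.const_mul μ).sub (hD.const_mul γ))
  refine ⟨by linarith, ?_, ?_⟩
  · field_simp
    linear_combination γ * total + recovered_dead_balance
  · field_simp
    linear_combination μ * total - recovered_dead_balance

theorem stmt_3_general
    (β11 β12 β21 β22 γ1 γ2 μ1 μ2 : ℝ)
    (hγ1 : 0 < γ1) (hγ2 : 0 < γ2) (hμ1 : 0 < μ1) (hμ2 : 0 < μ2)
    (S1 S2 I1 I2 R1 R2 D1 D2 N1 N2 : ℝ → ℝ)
    (hS1' : ∀ t ≥ (0:ℝ), HasDerivAt S1 (-(β11 * I1 t / N1 t + β12 * I2 t / N2 t) * S1 t) t)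
    (hS2' : ∀ t ≥ (0:ℝ), HasDerivAt S2 (-(β21 * I1 t / N1 t + β22 * I2 t / N2 t) * S2 t) t)
    (hI1' : ∀ t ≥ (0:ℝ), HasDerivAt I1 ((β11 * I1 t / N1 t + β12 * I2 t / N2 t) * S1 t - (γ1 + μ1) * I1 t) t)
    (hI2' : ∀ t ≥ (0:ℝ), HasDerivAt I2 ((β21 * I1 t / N1 t + β22 * I2 t / N2 t) * S2 t - (γ2 + μ2) * I2 t) t)
    (hR1' : ∀ t ≥ (0:ℝ), HasDerivAt R1 (γ1 * I1 t) t)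
    (hR2' : ∀ t ≥ (0:ℝ), HasDerivAt R2 (γ2 * I2 t) t)
    (hD1' : ∀ t ≥ (0:ℝ), HasDerivAt D1 (μ1 * I1 t) t)
    (hD2' : ∀ t ≥ (0:ℝ), HasDerivAt D2 (μ2 * I2 t) t)
    (S1inf R1inf D1inf S2inf R2inf D2inf : ℝ)
    (hS1inf : Tendsto S1 atTop (nhds S1inf)) (hS2inf : Tendsto S2 atTop (nhds S2inf))
    (hI1inf : Tendsto I1 atTop (nhds 0)) (hI2inf : Tendsto I2 atTop (nhds 0))
    (hR1inf : Tendsto R1 atTop (nhds R1inf)) (hR2inf : Tendsto R2 atTop (nhds R2inf))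
    (hD1inf : Tendsto D1 atTop (nhds D1inf)) (hD2inf : Tendsto D2 atTop (nhds D2inf)) :
    (S1inf = (S1 0 + I1 0 + R1 0 + D1 0) - R1inf - D1inf ∧
     R1inf = γ1 / (γ1 + μ1) * (S1 0 + I1 0 - S1inf) + R1 0 ∧
     D1inf = μ1 / (γ1 + μ1) * (S1 0 + I1 0 - S1inf) + D1 0) ∧
    (S2inf = (S2 0 + I2 0 + R2 0 + D2 0) - R2inf - D2inf ∧
     R2inf = γ2 / (γ2 + μ2) * (S2 0 + I2 0 - S2inf) + R2 0 ∧
     D2inf = μ2 / (γ2 + μ2) * (S2 0 + I2 0 - S2inf) + D2 0) := by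
  have hγμ1 : γ1 + μ1 ≠ 0 := by positivity
  have hγμ2 : γ2 + μ2 ≠ 0 := by positivity
  exact ⟨sird_limits_eq hγμ1 hS1' hI1' hR1' hD1' hS1inf hI1inf hR1inf hD1inf,
    sird_limits_eq hγμ2 hS2' hI2' hR2' hD2' hS2inf hI2inf hR2inf hD2inf⟩

theorem stmt_3
    (β11 β12 β21 β22 γ1 γ2 μ1 μ2 : ℝ)
    (hβ11 : 0 < β11) (hβ12 : 0 < β12) (hβ21 : 0 < β21) (hβ22 : 0 < β22)
    (hγ1 : 0 < γ1) (hγ2 : 0 < γ2) (hμ1 : 0 < μ1) (hμ2 : 0 < μ2)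
    (S1 S2 I1 I2 R1 R2 D1 D2 N1 N2 : ℝ → ℝ)
    (hN1 : ∀ t, N1 t = S1 t + I1 t + R1 t)
    (hN2 : ∀ t, N2 t = S2 t + I2 t + R2 t)
    (hS1' : ∀ t ≥ (0:ℝ), HasDerivAt S1 (-(β11 * I1 t / N1 t + β12 * I2 t / N2 t) * S1 t) t)
    (hS2' : ∀ t ≥ (0:ℝ), HasDerivAt S2 (-(β21 * I1 t / N1 t + β22 * I2 t / N2 t) * S2 t) t)
    (hI1' : ∀ t ≥ (0:ℝ), HasDerivAt I1 ((β11 * I1 t / N1 t + β12 * I2 t / N2 t) * S1 t - (γ1 + μ1) * I1 t) t)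
    (hI2' : ∀ t ≥ (0:ℝ), HasDerivAt I2 ((β21 * I1 t / N1 t + β22 * I2 t / N2 t) * S2 t - (γ2 + μ2) * I2 t) t)
    (hR1' : ∀ t ≥ (0:ℝ), HasDerivAt R1 (γ1 * I1 t) t)
    (hR2' : ∀ t ≥ (0:ℝ), HasDerivAt R2 (γ2 * I2 t) t)
    (hD1' : ∀ t ≥ (0:ℝ), HasDerivAt D1 (μ1 * I1 t) t)
    (hD2' : ∀ t ≥ (0:ℝ), HasDerivAt D2 (μ2 * I2 t) t)
    (hN1pos : ∀ t ≥ (0:ℝ), 0 < N1 t)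
    (hN2pos : ∀ t ≥ (0:ℝ), 0 < N2 t)
    (hS10 : 0 < S1 0) (hS20 : 0 < S2 0)
    (hI10 : 0 ≤ I1 0) (hI20 : 0 ≤ I2 0)
    (hR10 : 0 ≤ R1 0) (hR20 : 0 ≤ R2 0)
    (hD10 : 0 ≤ D1 0) (hD20 : 0 ≤ D2 0)
    (hbox1 : ∀ t ≥ (0:ℝ), (0 ≤ S1 t ∧ S1 t ≤ S1 0 + I1 0 + R1 0 + D1 0) ∧
      (0 ≤ I1 t ∧ I1 t ≤ S1 0 + I1 0 + R1 0 + D1 0) ∧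
      (0 ≤ R1 t ∧ R1 t ≤ S1 0 + I1 0 + R1 0 + D1 0) ∧
      (0 ≤ D1 t ∧ D1 t ≤ S1 0 + I1 0 + R1 0 + D1 0))
    (hbox2 : ∀ t ≥ (0:ℝ), (0 ≤ S2 t ∧ S2 t ≤ S2 0 + I2 0 + R2 0 + D2 0) ∧
      (0 ≤ I2 t ∧ I2 t ≤ S2 0 + I2 0 + R2 0 + D2 0) ∧
      (0 ≤ R2 t ∧ R2 t ≤ S2 0 + I2 0 + R2 0 + D2 0) ∧
      (0 ≤ D2 t ∧ D2 t ≤ S2 0 + I2 0 + R2 0 + D2 0))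
    (S1inf R1inf D1inf S2inf R2inf D2inf : ℝ)
    (hS1inf : Tendsto S1 atTop (nhds S1inf)) (hS2inf : Tendsto S2 atTop (nhds S2inf))
    (hI1inf : Tendsto I1 atTop (nhds 0)) (hI2inf : Tendsto I2 atTop (nhds 0))
    (hR1inf : Tendsto R1 atTop (nhds R1inf)) (hR2inf : Tendsto R2 atTop (nhds R2inf))
    (hD1inf : Tendsto D1 atTop (nhds D1inf)) (hD2inf : Tendsto D2 atTop (nhds D2inf)) :
    (S1inf = (S1 0 + I1 0 + R1 0 + D1 0) - R1inf - D1inf ∧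
     R1inf = γ1 / (γ1 + μ1) * (S1 0 + I1 0 - S1inf) + R1 0 ∧
     D1inf = μ1 / (γ1 + μ1) * (S1 0 + I1 0 - S1inf) + D1 0) ∧
    (S2inf = (S2 0 + I2 0 + R2 0 + D2 0) - R2inf - D2inf ∧
     R2inf = γ2 / (γ2 + μ2) * (S2 0 + I2 0 - S2inf) + R2 0 ∧
     D2inf = μ2 / (γ2 + μ2) * (S2 0 + I2 0 - S2inf) + D2 0) :=
  stmt_3_general β11 β12 β21 β22 γ1 γ2 μ1 μ2 hγ1 hγ2 hμ1 hμ2 S1 S2 I1 I2 R1 R2 D1 D2 N1 N2 hS1' hS2'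
    hI1' hI2' hR1' hR2' hD1' hD2' S1inf R1inf D1inf S2inf R2inf D2inf hS1inf hS2inf hI1inf hI2inf
    hR1inf hR2inf hD1inf hD2inf
end

section
/- Let (S₁,S₂,I₁,I₂,R₁,R₂,D₁,D₂) be a solution of the two-group active-population SIRD model on [0,∞) with initial data S₁(0) > 0, S₂(0) > 0, Iᵢ(0), Rᵢ(0) ≥ 0, all compartments remaining nonnegative, and suppose Sᵢ(t) > 0 and Nᵢ(t) > 0 for all t ≥ 0. Then for each i = 1,2 the function Fᵢ(t) := Sᵢ(t) / (N₁(t)^{βᵢ₁/μ₁} · N₂(t)^{βᵢ₂/μ₂}) is constant on [0,∞): Fᵢ(t) = Fᵢ(0) = Sᵢ(0) / (N₁(0)^{βᵢ₁/μ₁} · N₂(0)^{βᵢ₂/μ₂}) > 0 for all t ≥ 0 (a first integral of the system). -/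
open Real

/-!
Along a solution the total active population of group `j` obeys `Nⱼ' = -μⱼ Iⱼ`, since the
infected flow `βᵢⱼ Iⱼ / Nⱼ` out of `Sᵢ` is exactly `-(βᵢⱼ / μⱼ) Nⱼ' / Nⱼ`. Hence
`log Sᵢ - (βᵢ₁/μ₁) log N₁ - (βᵢ₂/μ₂) log N₂` has derivative zero, and exponentiating gives the
first integral `Sᵢ / (N₁^(βᵢ₁/μ₁) N₂^(βᵢ₂/μ₂))`.
-/

theorem eq_of_hasDerivAt_zero_of_le {g : ℝ → ℝ} {t₀ : ℝ} (hg : ∀ t ≥ t₀, HasDerivAt g 0 t) :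
    ∀ t ≥ t₀, g t = g t₀ := fun t ht =>
  constant_of_has_deriv_right_zero (fun x hx => (hg x hx.1).continuousAt.continuousWithinAt)
    (fun x hx => (hg x hx.1).hasDerivWithinAt) t ⟨ht, le_rfl⟩

theorem div_rpow_mul_rpow_eq_exp {s x y : ℝ} (hs : 0 < s) (hx : 0 < x) (hy : 0 < y) (a b : ℝ) :
    s / (x ^ a * y ^ b) = exp (log s - a * log x - b * log y) := by
  rw [rpow_def_of_pos hx, rpow_def_of_pos hy, sub_sub, exp_sub, exp_log hs, exp_add,
    mul_comm (log x), mul_comm (log y)]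

theorem div_rpow_mul_rpow_eq_of_logDeriv {S N₁ N₂ S' N₁' N₂' : ℝ → ℝ} {t₀ : ℝ} (a b : ℝ)
    (hS : ∀ t ≥ t₀, HasDerivAt S (S' t) t) (hN₁ : ∀ t ≥ t₀, HasDerivAt N₁ (N₁' t) t)
    (hN₂ : ∀ t ≥ t₀, HasDerivAt N₂ (N₂' t) t)
    (hS_pos : ∀ t ≥ t₀, 0 < S t) (hN₁_pos : ∀ t ≥ t₀, 0 < N₁ t) (hN₂_pos : ∀ t ≥ t₀, 0 < N₂ t)
    (hlog : ∀ t ≥ t₀, S' t / S t = a * (N₁' t / N₁ t) + b * (N₂' t / N₂ t)) :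
    ∀ t ≥ t₀, S t / (N₁ t ^ a * N₂ t ^ b) = S t₀ / (N₁ t₀ ^ a * N₂ t₀ ^ b) := by
  have hconst := eq_of_hasDerivAt_zero_of_le
    (g := fun t => log (S t) - a * log (N₁ t) - b * log (N₂ t)) fun t ht => by
      have hderiv := ((hS t ht).log (hS_pos t ht).ne').sub
        (((hN₁ t ht).log (hN₁_pos t ht).ne').const_mul a) |>.sub
        (((hN₂ t ht).log (hN₂_pos t ht).ne').const_mul b)
      rwa [hlog t ht, add_sub_cancel_left, sub_self] at hderiv
  intro t ht
  rw [div_rpow_mul_rpow_eq_exp (hS_pos t ht) (hN₁_pos t ht) (hN₂_pos t ht),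
    div_rpow_mul_rpow_eq_exp (hS_pos t₀ le_rfl) (hN₁_pos t₀ le_rfl) (hN₂_pos t₀ le_rfl),
    hconst t ht]

theorem sird_hasDerivAt_population {S I R : ℝ → ℝ} {t force γ μ : ℝ}
    (hS : HasDerivAt S (-force * S t) t) (hI : HasDerivAt I (force * S t - (γ + μ) * I t) t)
    (hR : HasDerivAt R (γ * I t) t) :
    HasDerivAt (fun t => S t + I t + R t) (-μ * I t) t :=
  ((hS.add hI).add hR).congr_deriv (by ring)

theorem sird_susceptible_div_rpow_mul_rpow_eq {β₁ β₂ μ₁ μ₂ t₀ : ℝ} (hμ₁ : μ₁ ≠ 0) (hμ₂ : μ₂ ≠ 0)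
    {S I₁ I₂ N₁ N₂ : ℝ → ℝ}
    (hS : ∀ t ≥ t₀, HasDerivAt S (-(β₁ * I₁ t / N₁ t + β₂ * I₂ t / N₂ t) * S t) t)
    (hN₁ : ∀ t ≥ t₀, HasDerivAt N₁ (-μ₁ * I₁ t) t) (hN₂ : ∀ t ≥ t₀, HasDerivAt N₂ (-μ₂ * I₂ t) t)
    (hS_pos : ∀ t ≥ t₀, 0 < S t) (hN₁_pos : ∀ t ≥ t₀, 0 < N₁ t) (hN₂_pos : ∀ t ≥ t₀, 0 < N₂ t) :
    ∀ t ≥ t₀, S t / (N₁ t ^ (β₁ / μ₁) * N₂ t ^ (β₂ / μ₂)) =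
      S t₀ / (N₁ t₀ ^ (β₁ / μ₁) * N₂ t₀ ^ (β₂ / μ₂)) :=
  div_rpow_mul_rpow_eq_of_logDeriv _ _ hS hN₁ hN₂ hS_pos hN₁_pos hN₂_pos fun t ht => by
    have hS_ne := (hS_pos t ht).ne'
    field_simp
    ring

theorem stmt_5_general
    (β11 β12 β21 β22 γ1 γ2 μ1 μ2 : ℝ)
    (hμ1 : 0 < μ1) (hμ2 : 0 < μ2)
    (S1 S2 I1 I2 R1 R2 N1 N2 : ℝ → ℝ)
    (hN1 : ∀ t, N1 t = S1 t + I1 t + R1 t)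
    (hN2 : ∀ t, N2 t = S2 t + I2 t + R2 t)
    (hS1' : ∀ t ≥ (0:ℝ), HasDerivAt S1 (-(β11 * I1 t / N1 t + β12 * I2 t / N2 t) * S1 t) t)
    (hS2' : ∀ t ≥ (0:ℝ), HasDerivAt S2 (-(β21 * I1 t / N1 t + β22 * I2 t / N2 t) * S2 t) t)
    (hI1' : ∀ t ≥ (0:ℝ), HasDerivAt I1 ((β11 * I1 t / N1 t + β12 * I2 t / N2 t) * S1 t - (γ1 + μ1) * I1 t) t)
    (hI2' : ∀ t ≥ (0:ℝ), HasDerivAt I2 ((β21 * I1 t / N1 t + β22 * I2 t / N2 t) * S2 t - (γ2 + μ2) * I2 t) t)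
    (hR1' : ∀ t ≥ (0:ℝ), HasDerivAt R1 (γ1 * I1 t) t)
    (hR2' : ∀ t ≥ (0:ℝ), HasDerivAt R2 (γ2 * I2 t) t)
    (hS1pos : ∀ t ≥ (0:ℝ), 0 < S1 t)
    (hS2pos : ∀ t ≥ (0:ℝ), 0 < S2 t)
    (hN1pos : ∀ t ≥ (0:ℝ), 0 < N1 t)
    (hN2pos : ∀ t ≥ (0:ℝ), 0 < N2 t)
    :
    ∀ t ≥ (0:ℝ),
      (S1 t / ((N1 t) ^ (β11 / μ1) * (N2 t) ^ (β12 / μ2))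
          = S1 0 / ((N1 0) ^ (β11 / μ1) * (N2 0) ^ (β12 / μ2)) ∧
        0 < S1 0 / ((N1 0) ^ (β11 / μ1) * (N2 0) ^ (β12 / μ2))) ∧
      (S2 t / ((N1 t) ^ (β21 / μ1) * (N2 t) ^ (β22 / μ2))
          = S2 0 / ((N1 0) ^ (β21 / μ1) * (N2 0) ^ (β22 / μ2)) ∧
        0 < S2 0 / ((N1 0) ^ (β21 / μ1) * (N2 0) ^ (β22 / μ2))) := by
  have hN1' : ∀ t ≥ (0:ℝ), HasDerivAt N1 (-μ1 * I1 t) t := fun t ht =>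
    funext hN1 ▸ sird_hasDerivAt_population (hS1' t ht) (hI1' t ht) (hR1' t ht)
  have hN2' : ∀ t ≥ (0:ℝ), HasDerivAt N2 (-μ2 * I2 t) t := fun t ht =>
    funext hN2 ▸ sird_hasDerivAt_population (hS2' t ht) (hI2' t ht) (hR2' t ht)
  have hN1pos0 := hN1pos 0 le_rfl
  have hN2pos0 := hN2pos 0 le_rfl
  intro t ht
  refine ⟨⟨?_, ?_⟩, ?_, ?_⟩
  · exact sird_susceptible_div_rpow_mul_rpow_eq hμ1.ne' hμ2.ne' hS1' hN1' hN2' hS1pos hN1pos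
      hN2pos t ht
  · have := hS1pos 0 le_rfl
    positivity
  · exact sird_susceptible_div_rpow_mul_rpow_eq hμ1.ne' hμ2.ne' hS2' hN1' hN2' hS2pos hN1pos
      hN2pos t ht
  · have := hS2pos 0 le_rfl
    positivity

theorem stmt_5
    (β11 β12 β21 β22 γ1 γ2 μ1 μ2 : ℝ)
    (hβ11 : 0 < β11) (hβ12 : 0 < β12) (hβ21 : 0 < β21) (hβ22 : 0 < β22)
    (hγ1 : 0 < γ1) (hγ2 : 0 < γ2) (hμ1 : 0 < μ1) (hμ2 : 0 < μ2)
    (S1 S2 I1 I2 R1 R2 D1 D2 N1 N2 : ℝ → ℝ)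
    (hN1 : ∀ t, N1 t = S1 t + I1 t + R1 t)
    (hN2 : ∀ t, N2 t = S2 t + I2 t + R2 t)
    (hS1' : ∀ t ≥ (0:ℝ), HasDerivAt S1 (-(β11 * I1 t / N1 t + β12 * I2 t / N2 t) * S1 t) t)
    (hS2' : ∀ t ≥ (0:ℝ), HasDerivAt S2 (-(β21 * I1 t / N1 t + β22 * I2 t / N2 t) * S2 t) t)
    (hI1' : ∀ t ≥ (0:ℝ), HasDerivAt I1 ((β11 * I1 t / N1 t + β12 * I2 t / N2 t) * S1 t - (γ1 + μ1) * I1 t) t)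
    (hI2' : ∀ t ≥ (0:ℝ), HasDerivAt I2 ((β21 * I1 t / N1 t + β22 * I2 t / N2 t) * S2 t - (γ2 + μ2) * I2 t) t)
    (hR1' : ∀ t ≥ (0:ℝ), HasDerivAt R1 (γ1 * I1 t) t)
    (hR2' : ∀ t ≥ (0:ℝ), HasDerivAt R2 (γ2 * I2 t) t)
    (hD1' : ∀ t ≥ (0:ℝ), HasDerivAt D1 (μ1 * I1 t) t)
    (hD2' : ∀ t ≥ (0:ℝ), HasDerivAt D2 (μ2 * I2 t) t)
    (hS10 : 0 < S1 0) (hS20 : 0 < S2 0)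
    (hI10 : 0 ≤ I1 0) (hI20 : 0 ≤ I2 0)
    (hR10 : 0 ≤ R1 0) (hR20 : 0 ≤ R2 0)
    (hD10 : 0 ≤ D1 0) (hD20 : 0 ≤ D2 0)
    (hnn1 : ∀ t ≥ (0:ℝ), 0 ≤ S1 t ∧ 0 ≤ I1 t ∧ 0 ≤ R1 t ∧ 0 ≤ D1 t)
    (hnn2 : ∀ t ≥ (0:ℝ), 0 ≤ S2 t ∧ 0 ≤ I2 t ∧ 0 ≤ R2 t ∧ 0 ≤ D2 t)
    (hS1pos : ∀ t ≥ (0:ℝ), 0 < S1 t)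
    (hS2pos : ∀ t ≥ (0:ℝ), 0 < S2 t)
    (hN1pos : ∀ t ≥ (0:ℝ), 0 < N1 t)
    (hN2pos : ∀ t ≥ (0:ℝ), 0 < N2 t)
    :
    ∀ t ≥ (0:ℝ),
      (S1 t / ((N1 t) ^ (β11 / μ1) * (N2 t) ^ (β12 / μ2))
          = S1 0 / ((N1 0) ^ (β11 / μ1) * (N2 0) ^ (β12 / μ2)) ∧
        0 < S1 0 / ((N1 0) ^ (β11 / μ1) * (N2 0) ^ (β12 / μ2))) ∧
      (S2 t / ((N1 t) ^ (β21 / μ1) * (N2 t) ^ (β22 / μ2))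
          = S2 0 / ((N1 0) ^ (β21 / μ1) * (N2 0) ^ (β22 / μ2)) ∧
        0 < S2 0 / ((N1 0) ^ (β21 / μ1) * (N2 0) ^ (β22 / μ2))) :=
  stmt_5_general β11 β12 β21 β22 γ1 γ2 μ1 μ2 hμ1 hμ2 S1 S2 I1 I2 R1 R2 N1 N2 hN1 hN2 hS1' hS2' hI1'
    hI2' hR1' hR2' hS1pos hS2pos hN1pos hN2pos
end

section
/- Let (S₁,S₂,I₁,I₂,R₁,R₂,D₁,D₂) be a solution of the two-group active-population SIRD model on [0,∞) with initial data S₁(0) > 0, S₂(0) > 0, Iᵢ(0), Rᵢ(0) ≥ 0, all compartments remaining nonnegative and bounded, with Sᵢ(t) > 0 and Nᵢ(t) > 0 for all t ≥ 0, and suppose the limits Sᵢ^∞ = lim_{t→∞} Sᵢ(t) and Nᵢ^∞ = lim_{t→∞} Nᵢ(t) exist with Nᵢ^∞ > 0. Then for each i = 1,2: Sᵢ^∞ = Fᵢ(0) · (N₁^∞)^{βᵢ₁/μ₁} · (N₂^∞)^{βᵢ₂/μ₂} > 0, where Fᵢ(0) = Sᵢ(0) / (N₁(0)^{βᵢ₁/μ₁}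 · N₂(0)^{βᵢ₂/μ₂}). In particular the final susceptible populations are strictly positive. -/
/-!
Since `N₁' = -μ₁ I₁` and `N₂' = -μ₂ I₂`, the force of infection acting on group `i` is itself a
combination of logarithmic derivatives:
`Sᵢ'/Sᵢ = (βᵢ₁/μ₁) N₁'/N₁ + (βᵢ₂/μ₂) N₂'/N₂`.
Hence `Sᵢ / (N₁^(βᵢ₁/μ₁) N₂^(βᵢ₂/μ₂))` is conserved along the solution, and letting `t → ∞`
expresses `Sᵢ^∞` through the positive limits `N₁^∞`, `N₂^∞`.
-/

open Filter Real

theorem hasDerivAt_active_population {S I R N : ℝ → ℝ} {κ γ μ t : ℝ}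
    (hN : ∀ u, N u = S u + I u + R u) (hS : HasDerivAt S (-κ * S t) t)
    (hI : HasDerivAt I (κ * S t - (γ + μ) * I t) t) (hR : HasDerivAt R (γ * I t) t) :
    HasDerivAt N (-(μ * I t)) t := by
  rw [funext hN]
  exact ((hS.add hI).add hR).congr_deriv (by ring)

theorem apply_eq_apply_zero_of_hasDerivAt_zero {G : ℝ → ℝ} (hG : ∀ t ≥ (0:ℝ), HasDerivAt G 0 t)
    {t : ℝ} (ht : 0 ≤ t) : G t = G 0 :=
  constant_of_has_deriv_right_zero (fun x hx => (hG x hx.1).continuousAt.continuousWithinAt)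
    (fun x hx => (hG x hx.1).hasDerivWithinAt) t ⟨ht, le_rfl⟩

theorem eq_mul_rpow_mul_rpow_of_logDeriv_eq {S N₁ N₂ S' N₁' N₂' : ℝ → ℝ} {c₁ c₂ : ℝ}
    (hS : ∀ t ≥ (0:ℝ), HasDerivAt S (S' t) t) (hN₁ : ∀ t ≥ (0:ℝ), HasDerivAt N₁ (N₁' t) t)
    (hN₂ : ∀ t ≥ (0:ℝ), HasDerivAt N₂ (N₂' t) t) (hSpos : ∀ t ≥ (0:ℝ), 0 < S t)
    (hN₁pos : ∀ t ≥ (0:ℝ), 0 < N₁ t) (hN₂pos : ∀ t ≥ (0:ℝ), 0 < N₂ t)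
    (hlog : ∀ t ≥ (0:ℝ), S' t / S t = c₁ * (N₁' t / N₁ t) + c₂ * (N₂' t / N₂ t))
    {t : ℝ} (ht : 0 ≤ t) :
    S t = S 0 / (N₁ 0 ^ c₁ * N₂ 0 ^ c₂) * N₁ t ^ c₁ * N₂ t ^ c₂ := by
  set G : ℝ → ℝ := fun u => log (S u) - c₁ * log (N₁ u) - c₂ * log (N₂ u)
  have hG : ∀ u ≥ (0:ℝ), HasDerivAt G 0 u := fun u hu => by
    have h := (((hS u hu).log (hSpos u hu).ne').sub
      (((hN₁ u hu).log (hN₁pos u hu).ne').const_mul c₁)).sub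
      (((hN₂ u hu).log (hN₂pos u hu).ne').const_mul c₂)
    exact h.congr_deriv (by rw [hlog u hu]; ring)
  have hexpG : ∀ u ≥ (0:ℝ), exp (G u) = S u / (N₁ u ^ c₁ * N₂ u ^ c₂) := fun u hu => by
    rw [exp_sub, exp_sub, exp_log (hSpos u hu), rpow_def_of_pos (hN₁pos u hu),
      rpow_def_of_pos (hN₂pos u hu), mul_comm c₁, mul_comm c₂, div_div]
  have hquot : S t / (N₁ t ^ c₁ * N₂ t ^ c₂) = S 0 / (N₁ 0 ^ c₁ * N₂ 0 ^ c₂) := by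
    rw [← hexpG t ht, ← hexpG 0 le_rfl, apply_eq_apply_zero_of_hasDerivAt_zero hG ht]
  have hpow : 0 < N₁ t ^ c₁ * N₂ t ^ c₂ :=
    mul_pos (rpow_pos_of_pos (hN₁pos t ht) c₁) (rpow_pos_of_pos (hN₂pos t ht) c₂)
  rw [← hquot, mul_assoc, div_mul_cancel₀ _ hpow.ne']

theorem limit_eq_mul_rpow_mul_rpow {S N₁ N₂ : ℝ → ℝ} {K c₁ c₂ Sinf N₁inf N₂inf : ℝ}
    (hS : S =ᶠ[atTop] fun t => K * N₁ t ^ c₁ * N₂ t ^ c₂) (hSinf : Tendsto S atTop (nhds Sinf))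
    (hN₁ : Tendsto N₁ atTop (nhds N₁inf)) (hN₂ : Tendsto N₂ atTop (nhds N₂inf))
    (hN₁inf : N₁inf ≠ 0) (hN₂inf : N₂inf ≠ 0) :
    Sinf = K * N₁inf ^ c₁ * N₂inf ^ c₂ :=
  tendsto_nhds_unique (hSinf.congr' hS)
    (((hN₁.rpow_const (Or.inl hN₁inf)).const_mul K).mul (hN₂.rpow_const (Or.inl hN₂inf)))

theorem sird_susceptible_limit {b₁ b₂ m₁ m₂ : ℝ} (hm₁ : m₁ ≠ 0) (hm₂ : m₂ ≠ 0)
    {S I₁ I₂ N₁ N₂ : ℝ → ℝ}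
    (hS : ∀ t ≥ (0:ℝ), HasDerivAt S (-(b₁ * I₁ t / N₁ t + b₂ * I₂ t / N₂ t) * S t) t)
    (hN₁ : ∀ t ≥ (0:ℝ), HasDerivAt N₁ (-(m₁ * I₁ t)) t)
    (hN₂ : ∀ t ≥ (0:ℝ), HasDerivAt N₂ (-(m₂ * I₂ t)) t)
    (hSpos : ∀ t ≥ (0:ℝ), 0 < S t) (hN₁pos : ∀ t ≥ (0:ℝ), 0 < N₁ t)
    (hN₂pos : ∀ t ≥ (0:ℝ), 0 < N₂ t) {Sinf N₁inf N₂inf : ℝ} (hSinf : Tendsto S atTop (nhds Sinf))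
    (hN₁inf : Tendsto N₁ atTop (nhds N₁inf)) (hN₂inf : Tendsto N₂ atTop (nhds N₂inf))
    (hN₁infpos : 0 < N₁inf) (hN₂infpos : 0 < N₂inf) :
    Sinf = S 0 / (N₁ 0 ^ (b₁ / m₁) * N₂ 0 ^ (b₂ / m₂)) * N₁inf ^ (b₁ / m₁) * N₂inf ^ (b₂ / m₂)
      ∧ 0 < Sinf := by
  have hlog : ∀ t ≥ (0:ℝ), -(b₁ * I₁ t / N₁ t + b₂ * I₂ t / N₂ t) * S t / S t =
      b₁ / m₁ * (-(m₁ * I₁ t) / N₁ t) + b₂ / m₂ * (-(m₂ * I₂ t) / N₂ t) := fun t ht => by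
    rw [mul_div_cancel_right₀ _ (hSpos t ht).ne']
    field_simp
    ring
  have hSinfeq := limit_eq_mul_rpow_mul_rpow
    (eventually_atTop.2 ⟨0, fun t ht =>
      eq_mul_rpow_mul_rpow_of_logDeriv_eq hS hN₁ hN₂ hSpos hN₁pos hN₂pos hlog ht⟩)
    hSinf hN₁inf hN₂inf hN₁infpos.ne' hN₂infpos.ne'
  refine ⟨hSinfeq, hSinfeq ▸ ?_⟩
  have := hSpos 0 le_rfl
  have := hN₁pos 0 le_rfl
  have := hN₂pos 0 le_rfl
  positivity

theorem stmt_6_general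
    (β11 β12 β21 β22 γ1 γ2 μ1 μ2 : ℝ)
    (hμ1 : 0 < μ1) (hμ2 : 0 < μ2)
    (S1 S2 I1 I2 R1 R2 N1 N2 : ℝ → ℝ)
    (hN1 : ∀ t, N1 t = S1 t + I1 t + R1 t)
    (hN2 : ∀ t, N2 t = S2 t + I2 t + R2 t)
    (hS1' : ∀ t ≥ (0:ℝ), HasDerivAt S1 (-(β11 * I1 t / N1 t + β12 * I2 t / N2 t) * S1 t) t)
    (hS2' : ∀ t ≥ (0:ℝ), HasDerivAt S2 (-(β21 * I1 t / N1 t + β22 * I2 t / N2 t) * S2 t) t)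
    (hI1' : ∀ t ≥ (0:ℝ), HasDerivAt I1 ((β11 * I1 t / N1 t + β12 * I2 t / N2 t) * S1 t - (γ1 + μ1) * I1 t) t)
    (hI2' : ∀ t ≥ (0:ℝ), HasDerivAt I2 ((β21 * I1 t / N1 t + β22 * I2 t / N2 t) * S2 t - (γ2 + μ2) * I2 t) t)
    (hR1' : ∀ t ≥ (0:ℝ), HasDerivAt R1 (γ1 * I1 t) t)
    (hR2' : ∀ t ≥ (0:ℝ), HasDerivAt R2 (γ2 * I2 t) t)
    (hS1pos : ∀ t ≥ (0:ℝ), 0 < S1 t)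
    (hS2pos : ∀ t ≥ (0:ℝ), 0 < S2 t)
    (hN1pos : ∀ t ≥ (0:ℝ), 0 < N1 t)
    (hN2pos : ∀ t ≥ (0:ℝ), 0 < N2 t)
    (S1inf S2inf N1inf N2inf : ℝ)
    (hS1inf : Tendsto S1 atTop (nhds S1inf)) (hS2inf : Tendsto S2 atTop (nhds S2inf))
    (hN1inf : Tendsto N1 atTop (nhds N1inf)) (hN2inf : Tendsto N2 atTop (nhds N2inf))
    (hN1infpos : 0 < N1inf) (hN2infpos : 0 < N2inf) :
    (S1inf = S1 0 / ((N1 0) ^ (β11 / μ1) * (N2 0) ^ (β12 / μ2))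
        * N1inf ^ (β11 / μ1) * N2inf ^ (β12 / μ2) ∧ 0 < S1inf) ∧
    (S2inf = S2 0 / ((N1 0) ^ (β21 / μ1) * (N2 0) ^ (β22 / μ2))
        * N1inf ^ (β21 / μ1) * N2inf ^ (β22 / μ2) ∧ 0 < S2inf) := by
  have hN1' : ∀ t ≥ (0:ℝ), HasDerivAt N1 (-(μ1 * I1 t)) t := fun t ht =>
    hasDerivAt_active_population hN1 (hS1' t ht) (hI1' t ht) (hR1' t ht)
  have hN2' : ∀ t ≥ (0:ℝ), HasDerivAt N2 (-(μ2 * I2 t)) t := fun t ht =>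
    hasDerivAt_active_population hN2 (hS2' t ht) (hI2' t ht) (hR2' t ht)
  exact ⟨sird_susceptible_limit hμ1.ne' hμ2.ne' hS1' hN1' hN2' hS1pos hN1pos hN2pos
      hS1inf hN1inf hN2inf hN1infpos hN2infpos,
    sird_susceptible_limit hμ1.ne' hμ2.ne' hS2' hN1' hN2' hS2pos hN1pos hN2pos
      hS2inf hN1inf hN2inf hN1infpos hN2infpos⟩

theorem stmt_6
    (β11 β12 β21 β22 γ1 γ2 μ1 μ2 : ℝ)
    (hβ11 : 0 < β11) (hβ12 : 0 < β12) (hβ21 : 0 < β21) (hβ22 : 0 < β22)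
    (hγ1 : 0 < γ1) (hγ2 : 0 < γ2) (hμ1 : 0 < μ1) (hμ2 : 0 < μ2)
    (S1 S2 I1 I2 R1 R2 D1 D2 N1 N2 : ℝ → ℝ)
    (hN1 : ∀ t, N1 t = S1 t + I1 t + R1 t)
    (hN2 : ∀ t, N2 t = S2 t + I2 t + R2 t)
    (hS1' : ∀ t ≥ (0:ℝ), HasDerivAt S1 (-(β11 * I1 t / N1 t + β12 * I2 t / N2 t) * S1 t) t)
    (hS2' : ∀ t ≥ (0:ℝ), HasDerivAt S2 (-(β21 * I1 t / N1 t + β22 * I2 t / N2 t) * S2 t) t)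
    (hI1' : ∀ t ≥ (0:ℝ), HasDerivAt I1 ((β11 * I1 t / N1 t + β12 * I2 t / N2 t) * S1 t - (γ1 + μ1) * I1 t) t)
    (hI2' : ∀ t ≥ (0:ℝ), HasDerivAt I2 ((β21 * I1 t / N1 t + β22 * I2 t / N2 t) * S2 t - (γ2 + μ2) * I2 t) t)
    (hR1' : ∀ t ≥ (0:ℝ), HasDerivAt R1 (γ1 * I1 t) t)
    (hR2' : ∀ t ≥ (0:ℝ), HasDerivAt R2 (γ2 * I2 t) t)
    (hD1' : ∀ t ≥ (0:ℝ), HasDerivAt D1 (μ1 * I1 t) t)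
    (hD2' : ∀ t ≥ (0:ℝ), HasDerivAt D2 (μ2 * I2 t) t)
    (hS10 : 0 < S1 0) (hS20 : 0 < S2 0)
    (hI10 : 0 ≤ I1 0) (hI20 : 0 ≤ I2 0)
    (hR10 : 0 ≤ R1 0) (hR20 : 0 ≤ R2 0)
    (hD10 : 0 ≤ D1 0) (hD20 : 0 ≤ D2 0)
    (hnn1 : ∀ t ≥ (0:ℝ), 0 ≤ S1 t ∧ 0 ≤ I1 t ∧ 0 ≤ R1 t ∧ 0 ≤ D1 t)
    (hnn2 : ∀ t ≥ (0:ℝ), 0 ≤ S2 t ∧ 0 ≤ I2 t ∧ 0 ≤ R2 t ∧ 0 ≤ D2 t)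
    (hbd : ∃ C : ℝ, ∀ t ≥ (0:ℝ), S1 t ≤ C ∧ I1 t ≤ C ∧ R1 t ≤ C ∧ D1 t ≤ C ∧
      S2 t ≤ C ∧ I2 t ≤ C ∧ R2 t ≤ C ∧ D2 t ≤ C)
    (hS1pos : ∀ t ≥ (0:ℝ), 0 < S1 t)
    (hS2pos : ∀ t ≥ (0:ℝ), 0 < S2 t)
    (hN1pos : ∀ t ≥ (0:ℝ), 0 < N1 t)
    (hN2pos : ∀ t ≥ (0:ℝ), 0 < N2 t)
    (S1inf S2inf N1inf N2inf : ℝ)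
    (hS1inf : Tendsto S1 atTop (nhds S1inf)) (hS2inf : Tendsto S2 atTop (nhds S2inf))
    (hN1inf : Tendsto N1 atTop (nhds N1inf)) (hN2inf : Tendsto N2 atTop (nhds N2inf))
    (hN1infpos : 0 < N1inf) (hN2infpos : 0 < N2inf) :
    (S1inf = S1 0 / ((N1 0) ^ (β11 / μ1) * (N2 0) ^ (β12 / μ2))
        * N1inf ^ (β11 / μ1) * N2inf ^ (β12 / μ2) ∧ 0 < S1inf) ∧
    (S2inf = S2 0 / ((N1 0) ^ (β21 / μ1) * (N2 0) ^ (β22 / μ2))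
        * N1inf ^ (β21 / μ1) * N2inf ^ (β22 / μ2) ∧ 0 < S2inf) :=
  stmt_6_general β11 β12 β21 β22 γ1 γ2 μ1 μ2 hμ1 hμ2 S1 S2 I1 I2 R1 R2 N1 N2 hN1 hN2 hS1' hS2' hI1'
    hI2' hR1' hR2' hS1pos hS2pos hN1pos hN2pos S1inf S2inf N1inf N2inf hS1inf hS2inf hN1inf hN2inf
    hN1infpos hN2infpos
end

section
/- Let T be the final-size map built from positive parameters βᵢⱼ, γᵢ, μᵢ and initial data S₁₀, S₂₀ > 0, I₁₀, I₂₀ ≥ 0, R₁₀, R₂₀ ≥ 0 with I₁₀ + I₂₀ > 0 (i.e. I₀ > 0). Then: (a) T is strictly monotone: if X, Y ∈ ℝ²₊ and xⱼ < yⱼ for j = 1,2, then Tᵢ(X) < Tᵢ(Y) for i = 1,2; (b) 0 < Tᵢ(0,0) for i = 1,2; (c) Tᵢ(0,0) < Tᵢ(S₁₀,S₂₀) for i = 1,2; and (d) Tᵢ(S₁₀,S₂₀) < Sᵢ₀ for i = 1,2. -/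
/-!
Each component of `T` is `Sᵢ₀` times positive powers of the affine factors
`aⱼ(x) = (εⱼ x + Zⱼ) / Nⱼ(0)`, which are increasing and positive on `ℝ₊` because
`0 < εⱼ < 1` makes `Zⱼ > 0`. At `x = Sⱼ₀` the factor equals `1 - εⱼ Iⱼ₀ / Nⱼ(0) ≤ 1`,
and `I₀ > 0` makes at least one of the two factors strictly smaller than `1`.
-/

noncomputable def Tmap (β11 β12 β21 β22 μ1 μ2 S10 S20 ε1 ε2 Z1 Z2 N10 N20 : ℝ) :
    ℝ × ℝ → ℝ × ℝ := fun X =>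
  (S10 * ((ε1 * X.1 + Z1) / N10) ^ (β11 / μ1) * ((ε2 * X.2 + Z2) / N20) ^ (β12 / μ2),
   S20 * ((ε1 * X.1 + Z1) / N10) ^ (β21 / μ1) * ((ε2 * X.2 + Z2) / N20) ^ (β22 / μ2))

open Set Real

lemma mul_rpow_mul_rpow_lt_mul_rpow_mul_rpow {S a b a' b' p q : ℝ} (hS : 0 < S) (hp : 0 < p)
    (hq : 0 < q) (ha : 0 ≤ a) (hb : 0 ≤ b) (haa' : a < a') (hbb' : b < b') :
    S * a ^ p * b ^ q < S * a' ^ p * b' ^ q :=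
  mul_lt_mul'' (mul_lt_mul_of_pos_left (rpow_lt_rpow ha haa' hp) hS) (rpow_lt_rpow hb hbb' hq)
    (by positivity) (by positivity)

lemma mul_rpow_mul_rpow_lt_self {S a b p q : ℝ} (hS : 0 < S) (hp : 0 < p) (hq : 0 < q)
    (ha₀ : 0 ≤ a) (hb₀ : 0 ≤ b) (ha : a ≤ 1) (hb : b ≤ 1) (hab : a < 1 ∨ b < 1) :
    S * a ^ p * b ^ q < S := by
  suffices a ^ p * b ^ q < 1 by simpa [mul_assoc] using mul_lt_mul_of_pos_left this hS
  rcases hab with ha' | hb'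
  · exact mul_lt_one_of_nonneg_of_lt_one_left (by positivity) (rpow_lt_one ha₀ ha' hp)
      (rpow_le_one hb₀ hb hq.le)
  · exact mul_lt_one_of_nonneg_of_lt_one_right (rpow_le_one ha₀ ha hp.le) (by positivity)
      (rpow_lt_one hb₀ hb' hq)

lemma div_add_self_mem_Ioo {γ μ : ℝ} (hγ : 0 < γ) (hμ : 0 < μ) : μ / (γ + μ) ∈ Ioo 0 1 :=
  ⟨by positivity, (div_lt_one (by positivity)).2 (by linarith)⟩

lemma one_sub_mul_add_mul_pos {ε N R : ℝ} (hε₀ : 0 ≤ ε) (hε₁ : ε < 1) (hN : 0 < N)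
    (hR : 0 ≤ R) : 0 < (1 - ε) * N + ε * R := by
  have : 0 < (1 - ε) * N := mul_pos (by linarith) hN
  nlinarith

lemma susceptible_factor_eq {ε S I R N Z : ℝ} (hN : N = S + I + R)
    (hZ : Z = (1 - ε) * N + ε * R) : ε * S + Z = N - ε * I := by
  rw [hZ, hN]; ring

lemma susceptible_factor_le_one {ε S I R N Z : ℝ} (hN : N = S + I + R)
    (hZ : Z = (1 - ε) * N + ε * R) (hN₀ : 0 < N) (hε : 0 ≤ ε) (hI : 0 ≤ I) :
    (ε * S + Z) / N ≤ 1 := by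
  rw [div_le_one hN₀, susceptible_factor_eq hN hZ]
  linarith [mul_nonneg hε hI]

lemma susceptible_factor_lt_one {ε S I R N Z : ℝ} (hN : N = S + I + R)
    (hZ : Z = (1 - ε) * N + ε * R) (hN₀ : 0 < N) (hε : 0 < ε) (hI : 0 < I) :
    (ε * S + Z) / N < 1 := by
  rw [div_lt_one hN₀, susceptible_factor_eq hN hZ]
  linarith [mul_pos hε hI]

theorem stmt_8
    (β11 β12 β21 β22 γ1 γ2 μ1 μ2 : ℝ)
    (hβ11 : 0 < β11) (hβ12 : 0 < β12) (hβ21 : 0 < β21) (hβ22 : 0 < β22)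
    (hγ1 : 0 < γ1) (hγ2 : 0 < γ2) (hμ1 : 0 < μ1) (hμ2 : 0 < μ2)
    (S10 S20 I10 I20 R10 R20 : ℝ)
    (hS10 : 0 < S10) (hS20 : 0 < S20)
    (hI10 : 0 ≤ I10) (hI20 : 0 ≤ I20)
    (hR10 : 0 ≤ R10) (hR20 : 0 ≤ R20)
    (ε1 ε2 Z1 Z2 N10 N20 : ℝ)
    (hN10 : N10 = S10 + I10 + R10) (hN20 : N20 = S20 + I20 + R20)
    (hε1 : ε1 = μ1 / (γ1 + μ1)) (hε2 : ε2 = μ2 / (γ2 + μ2))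
    (hZ1 : Z1 = (1 - ε1) * N10 + ε1 * R10) (hZ2 : Z2 = (1 - ε2) * N20 + ε2 * R20)
    (hI0 : 0 < I10 + I20)
    (T : ℝ × ℝ → ℝ × ℝ)
    (hT : T = Tmap β11 β12 β21 β22 μ1 μ2 S10 S20 ε1 ε2 Z1 Z2 N10 N20)
    :
    (∀ x1 x2 y1 y2 : ℝ, 0 ≤ x1 → 0 ≤ x2 → x1 < y1 → x2 < y2 →
      (T (x1, x2)).1 < (T (y1, y2)).1 ∧ (T (x1, x2)).2 < (T (y1, y2)).2) ∧
    (0 < (T (0, 0)).1 ∧ 0 < (T (0, 0)).2) ∧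
    ((T (0, 0)).1 < (T (S10, S20)).1 ∧ (T (0, 0)).2 < (T (S10, S20)).2) ∧
    ((T (S10, S20)).1 < S10 ∧ (T (S10, S20)).2 < S20) := by
  obtain ⟨hε1₀, hε1₁⟩ : ε1 ∈ Ioo 0 1 := hε1 ▸ div_add_self_mem_Ioo hγ1 hμ1
  obtain ⟨hε2₀, hε2₁⟩ : ε2 ∈ Ioo 0 1 := hε2 ▸ div_add_self_mem_Ioo hγ2 hμ2
  have hN1 : 0 < N10 := by rw [hN10]; positivity
  have hN2 : 0 < N20 := by rw [hN20]; positivity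
  have hZ1₀ : 0 < Z1 := hZ1 ▸ one_sub_mul_add_mul_pos hε1₀.le hε1₁ hN1 hR10
  have hZ2₀ : 0 < Z2 := hZ2 ▸ one_sub_mul_add_mul_pos hε2₀.le hε2₁ hN2 hR20
  have ha1 : ∀ x, 0 ≤ x → 0 ≤ (ε1 * x + Z1) / N10 := fun x hx => by positivity
  have ha2 : ∀ x, 0 ≤ x → 0 ≤ (ε2 * x + Z2) / N20 := fun x hx => by positivity
  have hmono1 : StrictMono fun x => (ε1 * x + Z1) / N10 := fun x y h => by dsimp; gcongr
  have hmono2 : StrictMono fun x => (ε2 * x + Z2) / N20 := fun x y h => by dsimp; gcongr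
  have hle1 := susceptible_factor_le_one hN10 hZ1 hN1 hε1₀.le hI10
  have hle2 := susceptible_factor_le_one hN20 hZ2 hN2 hε2₀.le hI20
  have hlt : (ε1 * S10 + Z1) / N10 < 1 ∨ (ε2 * S20 + Z2) / N20 < 1 := by
    have : 0 < I10 ∨ 0 < I20 := by by_contra! h; linarith [h.1, h.2]
    exact this.imp (susceptible_factor_lt_one hN10 hZ1 hN1 hε1₀)
      (susceptible_factor_lt_one hN20 hZ2 hN2 hε2₀)
  have hp : 0 < β11 / μ1 ∧ 0 < β12 / μ2 ∧ 0 < β21 / μ1 ∧ 0 < β22 / μ2 :=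
    ⟨by positivity, by positivity, by positivity, by positivity⟩
  subst hT
  refine ⟨fun x1 x2 y1 y2 hx1 hx2 h1 h2 => ⟨?_, ?_⟩, ⟨?_, ?_⟩, ⟨?_, ?_⟩, ?_, ?_⟩ <;>
    simp only [Tmap]
  · exact mul_rpow_mul_rpow_lt_mul_rpow_mul_rpow hS10 hp.1 hp.2.1 (ha1 x1 hx1) (ha2 x2 hx2)
      (hmono1 h1) (hmono2 h2)
  · exact mul_rpow_mul_rpow_lt_mul_rpow_mul_rpow hS20 hp.2.2.1 hp.2.2.2 (ha1 x1 hx1) (ha2 x2 hx2)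
      (hmono1 h1) (hmono2 h2)
  · positivity
  · positivity
  · exact mul_rpow_mul_rpow_lt_mul_rpow_mul_rpow hS10 hp.1 hp.2.1 (ha1 0 le_rfl) (ha2 0 le_rfl)
      (hmono1 hS10) (hmono2 hS20)
  · exact mul_rpow_mul_rpow_lt_mul_rpow_mul_rpow hS20 hp.2.2.1 hp.2.2.2 (ha1 0 le_rfl)
      (ha2 0 le_rfl) (hmono1 hS10) (hmono2 hS20)
  · exact mul_rpow_mul_rpow_lt_self hS10 hp.1 hp.2.1 (ha1 _ hS10.le) (ha2 _ hS20.le) hle1 hle2 hlt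
  · exact mul_rpow_mul_rpow_lt_self hS20 hp.2.2.1 hp.2.2.2 (ha1 _ hS10.le) (ha2 _ hS20.le)
      hle1 hle2 hlt
end

section
/- Let T be the final-size map built from positive parameters βᵢⱼ, γᵢ, μᵢ and initial data S₁₀, S₂₀ > 0, I₁₀, I₂₀ ≥ 0, R₁₀, R₂₀ ≥ 0 with I₁₀ + I₂₀ > 0. Then the iterates Tⁿ(0,0) form a componentwise increasing sequence and the iterates Tⁿ(S₁₀,S₂₀) form a componentwise decreasing sequence, with Tⁿ(0,0) ≤ Tⁿ(S₁₀,S₂₀) componentwise for all n; the limits S⁻ = lim_{n→∞} Tⁿ(0,0) and S⁺ = lim_{n→∞} Tⁿ(S₁₀,S₂₀) exist, satisfy 0 ≪ S⁻ ≤ S⁺ ≪ (S₁₀,S₂₀) (where ≪ means strict inequality in both components and ≤ means componentwise inequality), and are fixed points of T: T(S⁻) = S⁻ and T(S⁺) = S⁺. -/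
/-!
`T` is a monomial map `y ↦ (Sᵢ₀ y₁^(βᵢ₁/μ₁) y₂^(βᵢ₂/μ₂))ᵢ` with positive exponents composed with the
affine map `x ↦ ((εⱼ xⱼ + Zⱼ)/Nⱼ(0))ⱼ` with positive slopes and intercepts. Hence `T` sends the
closed orthant into the open one, is continuous there, and preserves strict componentwise order
`≪`. The affine map sends `S₀` to `(1 - εⱼ Iⱼ₀/Nⱼ(0))ⱼ`, which is `< 1` because some `Iⱼ₀ > 0`, so
`T S₀ ≪ S₀`. Monotone iteration from the subsolution `0` and the supersolution `S₀` then gives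
a strictly increasing and a strictly decreasing sequence, ordered by `≪`; both are bounded, so
they converge, and by continuity their limits are fixed points.
-/

open Filter

open Function Set Topology

namespace Prod

def StrongLT {α β : Type*} [LT α] [LT β] (x y : α × β) : Prop :=
  x.1 < y.1 ∧ x.2 < y.2

infix:50 " ≪ " => StrongLT

variable {α β : Type*} [Preorder α] [Preorder β] {x y z : α × β}

theorem StrongLT.le (h : x ≪ y) : x ≤ y := ⟨h.1.le, h.2.le⟩

theorem strongLT_of_strongLT_of_le (hxy : x ≪ y) (hyz : y ≤ z) : x ≪ z :=
  ⟨hxy.1.trans_le hyz.1, hxy.2.trans_le hyz.2⟩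

theorem strongLT_of_le_of_strongLT (hxy : x ≤ y) (hyz : y ≪ z) : x ≪ z :=
  ⟨hxy.1.trans_lt hyz.1, hxy.2.trans_lt hyz.2⟩

end Prod

open Prod

theorem Set.MapsTo.rel_iterate {α : Type*} {f : α → α} {s : Set α} {r : α → α → Prop}
    (hf : MapsTo f s s) (hr : ∀ x ∈ s, ∀ y, r x y → r (f x) (f y)) {x y : α} (hx : x ∈ s)
    (hxy : r x y) (n : ℕ) : r (f^[n] x) (f^[n] y) := by
  induction n generalizing x y with
  | zero => exact hxy
  | succ n ih => exact ih (hf hx) (hr x hx y hxy)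

theorem Prod.exists_tendsto_of_monotone_of_bddAbove {α β ι : Type*} [Preorder ι]
    [TopologicalSpace α] [ConditionallyCompletePartialOrderSup α] [SupConvergenceClass α]
    [TopologicalSpace β] [ConditionallyCompletePartialOrderSup β] [SupConvergenceClass β]
    {a : ι → α × β} (ha : Monotone a) (hb : BddAbove (range a)) :
    ∃ l, Tendsto a atTop (𝓝 l) := by
  have hb1 : BddAbove (range (Prod.fst ∘ a)) := range_comp _ _ ▸ monotone_fst.map_bddAbove hb
  have hb2 : BddAbove (range (Prod.snd ∘ a)) := range_comp _ _ ▸ monotone_snd.map_bddAbove hb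
  exact ⟨_, (tendsto_atTop_ciSup (monotone_fst.comp ha) hb1).prodMk_nhds
    (tendsto_atTop_ciSup (monotone_snd.comp ha) hb2)⟩

theorem Prod.exists_tendsto_of_antitone_of_bddBelow {α β ι : Type*} [Preorder ι]
    [TopologicalSpace α] [ConditionallyCompletePartialOrderInf α] [InfConvergenceClass α]
    [TopologicalSpace β] [ConditionallyCompletePartialOrderInf β] [InfConvergenceClass β]
    {a : ι → α × β} (ha : Antitone a) (hb : BddBelow (range a)) :
    ∃ l, Tendsto a atTop (𝓝 l) := by
  have hb1 : BddBelow (range (Prod.fst ∘ a)) := range_comp _ _ ▸ monotone_fst.map_bddBelow hb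
  have hb2 : BddBelow (range (Prod.snd ∘ a)) := range_comp _ _ ▸ monotone_snd.map_bddBelow hb
  exact ⟨_, (tendsto_atTop_ciInf (monotone_fst.comp_antitone ha) hb1).prodMk_nhds
    (tendsto_atTop_ciInf (monotone_snd.comp_antitone ha) hb2)⟩

theorem iterates_tendsto_fixedPts {T : ℝ × ℝ → ℝ × ℝ} {s : ℝ × ℝ}
    (hpos : ∀ x, 0 ≤ x → 0 ≪ T x) (hstrict : ∀ x, 0 ≤ x → ∀ y, x ≪ y → T x ≪ T y)
    (hcont : ∀ x, 0 ≤ x → ContinuousAt T x) (hs : 0 ≪ s) (hTs : T s ≪ s) :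
    (∀ n, T^[n] 0 ≪ T^[n + 1] 0) ∧ (∀ n, T^[n + 1] s ≪ T^[n] s) ∧ (∀ n, T^[n] 0 ≤ T^[n] s) ∧
    ∃ Sm Sp, Tendsto (fun n => T^[n] 0) atTop (𝓝 Sm) ∧ Tendsto (fun n => T^[n] s) atTop (𝓝 Sp) ∧
      0 ≪ Sm ∧ Sm ≤ Sp ∧ Sp ≪ s ∧ T Sm = Sm ∧ T Sp = Sp := by
  have hK : MapsTo T (Ici 0) (Ici 0) := fun x hx => (hpos x hx).le
  have hup n : T^[n] 0 ≪ T^[n + 1] 0 := by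
    rw [iterate_succ_apply]; exact hK.rel_iterate hstrict self_mem_Ici (hpos 0 le_rfl) n
  have hdown n : T^[n + 1] s ≪ T^[n] s := by
    rw [iterate_succ_apply]; exact hK.rel_iterate hstrict (hpos s hs.le).le hTs n
  have hbelow n : T^[n] 0 ≪ T^[n] s := hK.rel_iterate hstrict self_mem_Ici hs n
  have hmono : Monotone fun n => T^[n] 0 := monotone_nat_of_le_succ fun n => (hup n).le
  have hanti : Antitone fun n => T^[n] s := antitone_nat_of_succ_le fun n => (hdown n).le
  obtain ⟨Sm, hSm⟩ := exists_tendsto_of_monotone_of_bddAbove hmono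
    ⟨s, forall_mem_range.2 fun n => (hbelow n).le.trans (hanti n.zero_le)⟩
  obtain ⟨Sp, hSp⟩ := exists_tendsto_of_antitone_of_bddBelow hanti
    ⟨0, forall_mem_range.2 fun n => hK.iterate n hs.le⟩
  have hSm_pos : 0 ≪ Sm := strongLT_of_strongLT_of_le (hup 0) (hmono.ge_of_tendsto hSm 1)
  have hSm_le : Sm ≤ Sp := le_of_tendsto_of_tendsto' hSm hSp fun n => (hbelow n).le
  refine ⟨hup, hdown, fun n => (hbelow n).le, Sm, Sp, hSm, hSp, hSm_pos, hSm_le,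
    strongLT_of_le_of_strongLT (hanti.le_of_tendsto hSp 1) (hdown 0), ?_, ?_⟩
  · exact isFixedPt_of_tendsto_iterate hSm (hcont Sm hSm_pos.le)
  · exact isFixedPt_of_tendsto_iterate hSp (hcont Sp (hSm_pos.le.trans hSm_le))

noncomputable def monomialMap (S1 S2 a11 a12 a21 a22 : ℝ) (y : ℝ × ℝ) : ℝ × ℝ :=
  (S1 * y.1 ^ a11 * y.2 ^ a12, S2 * y.1 ^ a21 * y.2 ^ a22)

noncomputable def diagAffineMap (ε1 ε2 Z1 Z2 N1 N2 : ℝ) (x : ℝ × ℝ) : ℝ × ℝ :=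
  ((ε1 * x.1 + Z1) / N1, (ε2 * x.2 + Z2) / N2)

theorem Real.rpow_mul_rpow_lt_one {u v p q : ℝ} (hu : 0 ≤ u) (hv : 0 ≤ v) (hu1 : u ≤ 1)
    (hv1 : v ≤ 1) (huv : u < 1 ∨ v < 1) (hp : 0 < p) (hq : 0 < q) : u ^ p * v ^ q < 1 := by
  rcases huv with hu1' | hv1'
  · exact mul_lt_one_of_nonneg_of_lt_one_left (rpow_nonneg hu p) (rpow_lt_one hu hu1' hp)
      (rpow_le_one hv hv1 hq.le)
  · exact mul_lt_one_of_nonneg_of_lt_one_right (rpow_le_one hu hu1 hp.le) (rpow_nonneg hv q)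
      (rpow_lt_one hv hv1' hq)

section monomialMap

variable {S1 S2 a11 a12 a21 a22 : ℝ} {y z : ℝ × ℝ}

theorem monomialMap_pos (hS1 : 0 < S1) (hS2 : 0 < S2) (hy : 0 ≪ y) :
    0 ≪ monomialMap S1 S2 a11 a12 a21 a22 y := by
  have h1 : 0 < y.1 := hy.1
  have h2 : 0 < y.2 := hy.2
  constructor <;> simp only [monomialMap] <;> positivity

theorem monomialMap_strongLT_monomialMap (hS1 : 0 < S1) (hS2 : 0 < S2) (h11 : 0 < a11)
    (h12 : 0 < a12) (h21 : 0 < a21) (h22 : 0 < a22) (hy : 0 ≪ y) (hyz : y ≪ z) :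
    monomialMap S1 S2 a11 a12 a21 a22 y ≪ monomialMap S1 S2 a11 a12 a21 a22 z := by
  have h1 : 0 < y.1 := hy.1
  have h2 : 0 < y.2 := hy.2
  have hyz1 : y.1 < z.1 := hyz.1
  have hyz2 : y.2 < z.2 := hyz.2
  constructor <;> simp only [monomialMap] <;> gcongr

theorem continuousAt_monomialMap (hy : 0 ≪ y) :
    ContinuousAt (monomialMap S1 S2 a11 a12 a21 a22) y := by
  have h1 : ∀ p : ℝ, ContinuousAt (fun y : ℝ × ℝ => y.1 ^ p) y := fun p =>
    continuousAt_fst.rpow_const (Or.inl hy.1.ne')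
  have h2 : ∀ p : ℝ, ContinuousAt (fun y : ℝ × ℝ => y.2 ^ p) y := fun p =>
    continuousAt_snd.rpow_const (Or.inl hy.2.ne')
  exact ((continuousAt_const.mul (h1 _)).mul (h2 _)).prodMk
    ((continuousAt_const.mul (h1 _)).mul (h2 _))

theorem monomialMap_strongLT_of_lt_one (hS1 : 0 < S1) (hS2 : 0 < S2) (h11 : 0 < a11)
    (h12 : 0 < a12) (h21 : 0 < a21) (h22 : 0 < a22) (hy0 : 0 ≤ y) (hy1 : y < 1) :
    monomialMap S1 S2 a11 a12 a21 a22 y ≪ (S1, S2) := by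
  have hlt : y.1 < 1 ∨ y.2 < 1 := by
    rcases Prod.lt_iff.1 hy1 with h | h
    exacts [Or.inl h.1, Or.inr h.2]
  constructor <;> simp only [monomialMap] <;> rw [mul_assoc] <;>
    refine mul_lt_of_lt_one_right (by assumption) (Real.rpow_mul_rpow_lt_one hy0.1 hy0.2
      hy1.le.1 hy1.le.2 hlt (by assumption) (by assumption))

end monomialMap

section diagAffineMap

variable {ε1 ε2 Z1 Z2 N1 N2 : ℝ} {x y : ℝ × ℝ}

theorem diagAffineMap_pos (hε1 : 0 ≤ ε1) (hε2 : 0 ≤ ε2) (hZ1 : 0 < Z1) (hZ2 : 0 < Z2)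
    (hN1 : 0 < N1) (hN2 : 0 < N2) (hx : 0 ≤ x) : 0 ≪ diagAffineMap ε1 ε2 Z1 Z2 N1 N2 x := by
  have h1 : 0 ≤ x.1 := hx.1
  have h2 : 0 ≤ x.2 := hx.2
  constructor <;> simp only [diagAffineMap] <;> positivity

theorem diagAffineMap_strongLT_diagAffineMap (hε1 : 0 < ε1) (hε2 : 0 < ε2) (hN1 : 0 < N1)
    (hN2 : 0 < N2) (hxy : x ≪ y) :
    diagAffineMap ε1 ε2 Z1 Z2 N1 N2 x ≪ diagAffineMap ε1 ε2 Z1 Z2 N1 N2 y := by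
  have hxy1 : x.1 < y.1 := hxy.1
  have hxy2 : x.2 < y.2 := hxy.2
  constructor <;> simp only [diagAffineMap] <;> gcongr

theorem continuous_diagAffineMap : Continuous (diagAffineMap ε1 ε2 Z1 Z2 N1 N2) := by
  unfold diagAffineMap
  fun_prop

theorem diagAffineMap_initial_lt_one {S1 S2 I1 I2 R1 R2 : ℝ} (hε1 : 0 < ε1) (hε2 : 0 < ε2)
    (hI1 : 0 ≤ I1) (hI2 : 0 ≤ I2) (hI : 0 < I1 + I2) (hN1 : 0 < N1) (hN2 : 0 < N2)
    (hN1_eq : N1 = S1 + I1 + R1) (hN2_eq : N2 = S2 + I2 + R2)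
    (hZ1 : Z1 = (1 - ε1) * N1 + ε1 * R1) (hZ2 : Z2 = (1 - ε2) * N2 + ε2 * R2) :
    diagAffineMap ε1 ε2 Z1 Z2 N1 N2 (S1, S2) < 1 := by
  have hA1 : ε1 * S1 + Z1 = N1 - ε1 * I1 := by rw [hZ1, hN1_eq]; ring
  have hA2 : ε2 * S2 + Z2 = N2 - ε2 * I2 := by rw [hZ2, hN2_eq]; ring
  simp only [diagAffineMap, ← Prod.mk_one_one, Prod.mk_lt_mk, div_lt_one hN1, div_le_one hN1,
    div_lt_one hN2, div_le_one hN2, hA1, hA2, sub_lt_self_iff, sub_le_self_iff]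
  rcases hI1.eq_or_lt with h | h
  · have : 0 < I2 := by linarith
    exact Or.inr ⟨by positivity, by positivity⟩
  · exact Or.inl ⟨by positivity, by positivity⟩

end diagAffineMap

theorem Tmap_eq_comp (β11 β12 β21 β22 μ1 μ2 S10 S20 ε1 ε2 Z1 Z2 N10 N20 : ℝ) :
    Tmap β11 β12 β21 β22 μ1 μ2 S10 S20 ε1 ε2 Z1 Z2 N10 N20 =
      monomialMap S10 S20 (β11 / μ1) (β12 / μ2) (β21 / μ1) (β22 / μ2) ∘
        diagAffineMap ε1 ε2 Z1 Z2 N10 N20 :=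
  rfl

theorem stmt_9
    (β11 β12 β21 β22 γ1 γ2 μ1 μ2 : ℝ)
    (hβ11 : 0 < β11) (hβ12 : 0 < β12) (hβ21 : 0 < β21) (hβ22 : 0 < β22)
    (hγ1 : 0 < γ1) (hγ2 : 0 < γ2) (hμ1 : 0 < μ1) (hμ2 : 0 < μ2)
    (S10 S20 I10 I20 R10 R20 : ℝ)
    (hS10 : 0 < S10) (hS20 : 0 < S20)
    (hI10 : 0 ≤ I10) (hI20 : 0 ≤ I20)
    (hR10 : 0 ≤ R10) (hR20 : 0 ≤ R20)
    (ε1 ε2 Z1 Z2 N10 N20 : ℝ)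
    (hN10 : N10 = S10 + I10 + R10) (hN20 : N20 = S20 + I20 + R20)
    (hε1 : ε1 = μ1 / (γ1 + μ1)) (hε2 : ε2 = μ2 / (γ2 + μ2))
    (hZ1 : Z1 = (1 - ε1) * N10 + ε1 * R10) (hZ2 : Z2 = (1 - ε2) * N20 + ε2 * R20)
    (hI0 : 0 < I10 + I20)
    (T : ℝ × ℝ → ℝ × ℝ)
    (hT : T = Tmap β11 β12 β21 β22 μ1 μ2 S10 S20 ε1 ε2 Z1 Z2 N10 N20)
    :
    (∀ n : ℕ, (T^[n] (0, 0)).1 < (T^[n+1] (0, 0)).1 ∧ (T^[n] (0, 0)).2 < (T^[n+1] (0, 0)).2) ∧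
    (∀ n : ℕ, (T^[n+1] (S10, S20)).1 < (T^[n] (S10, S20)).1 ∧
      (T^[n+1] (S10, S20)).2 < (T^[n] (S10, S20)).2) ∧
    (∀ n : ℕ, (T^[n] (0, 0)).1 ≤ (T^[n] (S10, S20)).1 ∧ (T^[n] (0, 0)).2 ≤ (T^[n] (S10, S20)).2) ∧
    ∃ Sm Sp : ℝ × ℝ,
      Tendsto (fun n => T^[n] (0, 0)) atTop (nhds Sm) ∧
      Tendsto (fun n => T^[n] (S10, S20)) atTop (nhds Sp) ∧
      (0 < Sm.1 ∧ 0 < Sm.2) ∧ (Sm.1 ≤ Sp.1 ∧ Sm.2 ≤ Sp.2) ∧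
      (Sp.1 < S10 ∧ Sp.2 < S20) ∧ T Sm = Sm ∧ T Sp = Sp := by
  have hN1 : 0 < N10 := by rw [hN10]; positivity
  have hN2 : 0 < N20 := by rw [hN20]; positivity
  have hε1_pos : 0 < ε1 := by rw [hε1]; positivity
  have hε2_pos : 0 < ε2 := by rw [hε2]; positivity
  have hε1_lt : ε1 < 1 := by rw [hε1, div_lt_one (by positivity)]; linarith
  have hε2_lt : ε2 < 1 := by rw [hε2, div_lt_one (by positivity)]; linarith
  have hZ1_pos : 0 < Z1 :=
    hZ1 ▸ add_pos_of_pos_of_nonneg (mul_pos (sub_pos.2 hε1_lt) hN1) (mul_nonneg hε1_pos.le hR10)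
  have hZ2_pos : 0 < Z2 :=
    hZ2 ▸ add_pos_of_pos_of_nonneg (mul_pos (sub_pos.2 hε2_lt) hN2) (mul_nonneg hε2_pos.le hR20)
  have hA_pos {x : ℝ × ℝ} (hx : 0 ≤ x) : 0 ≪ diagAffineMap ε1 ε2 Z1 Z2 N10 N20 x :=
    diagAffineMap_pos hε1_pos.le hε2_pos.le hZ1_pos hZ2_pos hN1 hN2 hx
  obtain ⟨h11, h12, h21, h22⟩ : 0 < β11 / μ1 ∧ 0 < β12 / μ2 ∧ 0 < β21 / μ1 ∧ 0 < β22 / μ2 :=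
    ⟨by positivity, by positivity, by positivity, by positivity⟩
  rw [hT, Tmap_eq_comp]
  exact iterates_tendsto_fixedPts (fun x hx => monomialMap_pos hS10 hS20 (hA_pos hx))
    (fun x hx y hxy => monomialMap_strongLT_monomialMap hS10 hS20 h11 h12 h21 h22 (hA_pos hx)
      (diagAffineMap_strongLT_diagAffineMap hε1_pos hε2_pos hN1 hN2 hxy))
    (fun x hx => (continuousAt_monomialMap (hA_pos hx)).comp continuous_diagAffineMap.continuousAt)
    ⟨hS10, hS20⟩
    (monomialMap_strongLT_of_lt_one hS10 hS20 h11 h12 h21 h22 (hA_pos ⟨hS10.le, hS20.le⟩).le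
      (diagAffineMap_initial_lt_one hε1_pos hε2_pos hI10 hI20 hI0 hN1 hN2 hN10 hN20 hZ1 hZ2))
end

section
/- Let T be the final-size map built from positive parameters βᵢⱼ, γᵢ, μᵢ and initial data S₁₀, S₂₀ > 0, I₁₀, I₂₀ ≥ 0, R₁₀, R₂₀ ≥ 0, and assume hypothesis H2a: βᵢⱼ/μⱼ ≥ 1 for all i,j ∈ {1,2}. Then each partial derivative of T, given explicitly by ∂Tᵢ/∂xⱼ(X) = (βᵢⱼ/μⱼ) · (εⱼ/(εⱼxⱼ+Zⱼ)) · Tᵢ(X), is componentwise increasing on ℝ²₊: if X ≤ Y componentwise with X, Y ∈ ℝ²₊, then ∂Tᵢ/∂xⱼ(X) ≤ ∂Tᵢ/∂xⱼ(Y) for all i,j ∈ {1,2}. -/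
open Filter

lemma key_mono (a b ε Z N ε' Z' N' K x y x' y' : ℝ)
    (hK : 0 ≤ K) (hε : 0 < ε) (hZ : 0 < Z) (hN : 0 < N)
    (hε' : 0 < ε') (hZ' : 0 < Z') (hN' : 0 < N')
    (ha : 1 ≤ a) (hb : 0 ≤ b)
    (hx : 0 ≤ x) (hx' : 0 ≤ x') (hxy : x ≤ y) (hxy' : x' ≤ y') :
    K * (ε / (ε * x + Z)) * (((ε * x + Z) / N) ^ a * ((ε' * x' + Z') / N') ^ b)
      ≤ K * (ε / (ε * y + Z)) * (((ε * y + Z) / N) ^ a * ((ε' * y' + Z') / N') ^ b) := by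
  have hxZ : 0 < ε * x + Z := by positivity
  have hyZ : 0 < ε * y + Z := by nlinarith
  have hx'Z : 0 < ε' * x' + Z' := by positivity
  have hy'Z : 0 < ε' * y' + Z' := by nlinarith
  have key : ∀ u u' : ℝ, 0 < ε * u + Z → 0 < ε' * u' + Z' →
      K * (ε / (ε * u + Z)) * (((ε * u + Z) / N) ^ a * ((ε' * u' + Z') / N') ^ b)
      = (K * ε / N) * (((ε * u + Z) / N) ^ (a - 1) * ((ε' * u' + Z') / N') ^ b) := by
    intro u u' hu hu'
    have hbase : (0 : ℝ) < (ε * u + Z) / N := by positivity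
    rw [show a = (a-1)+1 by ring, Real.rpow_add hbase, Real.rpow_one]
    field_simp
    ring
  rw [key x x' hxZ hx'Z, key y y' hyZ hy'Z]
  have h1 : (0:ℝ) ≤ K * ε / N := by positivity
  gcongr (K * ε / N) * (?_ * ?_)
  · exact Real.rpow_le_rpow (by positivity) (by gcongr) (by linarith)
  · exact Real.rpow_le_rpow (by positivity) (by gcongr) hb


theorem stmt_10
    (β11 β12 β21 β22 γ1 γ2 μ1 μ2 : ℝ)
    (hβ11 : 0 < β11) (hβ12 : 0 < β12) (hβ21 : 0 < β21) (hβ22 : 0 < β22)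
    (hγ1 : 0 < γ1) (hγ2 : 0 < γ2) (hμ1 : 0 < μ1) (hμ2 : 0 < μ2)
    (S10 S20 I10 I20 R10 R20 : ℝ)
    (hS10 : 0 < S10) (hS20 : 0 < S20)
    (hI10 : 0 ≤ I10) (hI20 : 0 ≤ I20)
    (hR10 : 0 ≤ R10) (hR20 : 0 ≤ R20)
    (ε1 ε2 Z1 Z2 N10 N20 : ℝ)
    (hN10 : N10 = S10 + I10 + R10) (hN20 : N20 = S20 + I20 + R20)
    (hε1 : ε1 = μ1 / (γ1 + μ1)) (hε2 : ε2 = μ2 / (γ2 + μ2))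
    (hZ1 : Z1 = (1 - ε1) * N10 + ε1 * R10) (hZ2 : Z2 = (1 - ε2) * N20 + ε2 * R20)
    (hH2a11 : 1 ≤ β11 / μ1) (hH2a12 : 1 ≤ β12 / μ2)
    (hH2a21 : 1 ≤ β21 / μ1) (hH2a22 : 1 ≤ β22 / μ2)
    (T : ℝ × ℝ → ℝ × ℝ)
    (hT : T = Tmap β11 β12 β21 β22 μ1 μ2 S10 S20 ε1 ε2 Z1 Z2 N10 N20)
    :
    ∀ x1 x2 y1 y2 : ℝ, 0 ≤ x1 → 0 ≤ x2 → x1 ≤ y1 → x2 ≤ y2 →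
      (β11 / μ1 * (ε1 / (ε1 * x1 + Z1)) * (T (x1, x2)).1
        ≤ β11 / μ1 * (ε1 / (ε1 * y1 + Z1)) * (T (y1, y2)).1) ∧
      (β12 / μ2 * (ε2 / (ε2 * x2 + Z2)) * (T (x1, x2)).1
        ≤ β12 / μ2 * (ε2 / (ε2 * y2 + Z2)) * (T (y1, y2)).1) ∧
      (β21 / μ1 * (ε1 / (ε1 * x1 + Z1)) * (T (x1, x2)).2
        ≤ β21 / μ1 * (ε1 / (ε1 * y1 + Z1)) * (T (y1, y2)).2) ∧
      (β22 / μ2 * (ε2 / (ε2 * x2 + Z2)) * (T (x1, x2)).2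
        ≤ β22 / μ2 * (ε2 / (ε2 * y2 + Z2)) * (T (y1, y2)).2) := by

  subst hT
  have hε1p : 0 < ε1 := by rw [hε1]; positivity
  have hε2p : 0 < ε2 := by rw [hε2]; positivity
  have hN10p : 0 < N10 := by rw [hN10]; linarith
  have hN20p : 0 < N20 := by rw [hN20]; linarith
  have h1e : 0 < 1 - ε1 := by
    rw [hε1, sub_pos, div_lt_one (by linarith)]; linarith
  have h2e : 0 < 1 - ε2 := by
    rw [hε2, sub_pos, div_lt_one (by linarith)]; linarith
  have hZ1p : 0 < Z1 := by
    rw [hZ1]; have := mul_pos h1e hN10p; nlinarith [mul_nonneg hε1p.le hR10]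
  have hZ2p : 0 < Z2 := by
    rw [hZ2]; have := mul_pos h2e hN20p; nlinarith [mul_nonneg hε2p.le hR20]
  intro x1 x2 y1 y2 hx1 hx2 h1 h2
  simp only [Tmap]
  refine ⟨?_, ?_, ?_, ?_⟩
  · calc β11 / μ1 * (ε1 / (ε1 * x1 + Z1)) *
        (S10 * ((ε1 * x1 + Z1) / N10) ^ (β11 / μ1) * ((ε2 * x2 + Z2) / N20) ^ (β12 / μ2))
        = (β11 / μ1 * S10) * (ε1 / (ε1 * x1 + Z1)) *
          (((ε1 * x1 + Z1) / N10) ^ (β11 / μ1) * ((ε2 * x2 + Z2) / N20) ^ (β12 / μ2)) := by ring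
      _ ≤ (β11 / μ1 * S10) * (ε1 / (ε1 * y1 + Z1)) *
          (((ε1 * y1 + Z1) / N10) ^ (β11 / μ1) * ((ε2 * y2 + Z2) / N20) ^ (β12 / μ2)) :=
        key_mono _ _ _ _ _ _ _ _ _ _ _ _ _ (by positivity) hε1p hZ1p hN10p hε2p hZ2p hN20p
          hH2a11 (by linarith) hx1 hx2 h1 h2
      _ = _ := by ring
  · calc β12 / μ2 * (ε2 / (ε2 * x2 + Z2)) *
        (S10 * ((ε1 * x1 + Z1) / N10) ^ (β11 / μ1) * ((ε2 * x2 + Z2) / N20) ^ (β12 / μ2))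
        = (β12 / μ2 * S10) * (ε2 / (ε2 * x2 + Z2)) *
          (((ε2 * x2 + Z2) / N20) ^ (β12 / μ2) * ((ε1 * x1 + Z1) / N10) ^ (β11 / μ1)) := by ring
      _ ≤ (β12 / μ2 * S10) * (ε2 / (ε2 * y2 + Z2)) *
          (((ε2 * y2 + Z2) / N20) ^ (β12 / μ2) * ((ε1 * y1 + Z1) / N10) ^ (β11 / μ1)) :=
        key_mono _ _ _ _ _ _ _ _ _ _ _ _ _ (by positivity) hε2p hZ2p hN20p hε1p hZ1p hN10p
          hH2a12 (by linarith) hx2 hx1 h2 h1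
      _ = _ := by ring
  · calc β21 / μ1 * (ε1 / (ε1 * x1 + Z1)) *
        (S20 * ((ε1 * x1 + Z1) / N10) ^ (β21 / μ1) * ((ε2 * x2 + Z2) / N20) ^ (β22 / μ2))
        = (β21 / μ1 * S20) * (ε1 / (ε1 * x1 + Z1)) *
          (((ε1 * x1 + Z1) / N10) ^ (β21 / μ1) * ((ε2 * x2 + Z2) / N20) ^ (β22 / μ2)) := by ring
      _ ≤ (β21 / μ1 * S20) * (ε1 / (ε1 * y1 + Z1)) *
          (((ε1 * y1 + Z1) / N10) ^ (β21 / μ1) * ((ε2 * y2 + Z2) / N20) ^ (β22 / μ2)) :=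
        key_mono _ _ _ _ _ _ _ _ _ _ _ _ _ (by positivity) hε1p hZ1p hN10p hε2p hZ2p hN20p
          hH2a21 (by linarith) hx1 hx2 h1 h2
      _ = _ := by ring
  · calc β22 / μ2 * (ε2 / (ε2 * x2 + Z2)) *
        (S20 * ((ε1 * x1 + Z1) / N10) ^ (β21 / μ1) * ((ε2 * x2 + Z2) / N20) ^ (β22 / μ2))
        = (β22 / μ2 * S20) * (ε2 / (ε2 * x2 + Z2)) *
          (((ε2 * x2 + Z2) / N20) ^ (β22 / μ2) * ((ε1 * x1 + Z1) / N10) ^ (β21 / μ1)) := by ring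
      _ ≤ (β22 / μ2 * S20) * (ε2 / (ε2 * y2 + Z2)) *
          (((ε2 * y2 + Z2) / N20) ^ (β22 / μ2) * ((ε1 * y1 + Z1) / N10) ^ (β21 / μ1)) :=
        key_mono _ _ _ _ _ _ _ _ _ _ _ _ _ (by positivity) hε2p hZ2p hN20p hε1p hZ1p hN10p
          hH2a22 (by linarith) hx2 hx1 h2 h1
      _ = _ := by ring
end

section
/- Let T be the final-size map built from positive parameters βᵢⱼ, γᵢ, μᵢ and initial data S₁₀, S₂₀ > 0, I₁₀, I₂₀ ≥ 0, R₁₀, R₂₀ ≥ 0 with I₁₀ + I₂₀ > 0, and assume hypothesis H2a: βᵢⱼ/μⱼ ≥ 1 for all i,j ∈ {1,2}. Then T has exactly one fixed point S* in [0,S₁₀]×[0,S₂₀], this fixed point satisfies 0 < Sᵢ* < Sᵢ₀ for i = 1,2, and S* = lim_{n→∞} Tⁿ(0,0). -/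
open Filter

open Set Topology

section Iteration

variable {α : Type*} [PartialOrder α] [TopologicalSpace α] [CompactIccSpace α]
  [OrderClosedTopology α] {T : α → α} {a b : α}

theorem Monotone.exists_tendsto_of_mem_Icc [SupConvergenceClass α] {f : ℕ → α} (hf : Monotone f)
    (hmem : ∀ n, f n ∈ Icc a b) : ∃ L ∈ Icc a b, Tendsto f atTop (𝓝 L) := by
  obtain ⟨L, hL, hcl⟩ := isCompact_Icc.exists_mapClusterPt (f := atTop)
    (tendsto_principal.2 (Eventually.of_forall hmem))
  have hlub : IsLUB (range f) L :=
    ⟨forall_mem_range.2 fun n => isClosed_Ici.mem_of_mapClusterPt hcl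
      (eventually_atTop.2 ⟨n, fun _ hm => hf hm⟩),
    fun u hu => isClosed_Iic.mem_of_mapClusterPt hcl
      (Eventually.of_forall fun n => hu (mem_range_self n))⟩
  exact ⟨L, hL, tendsto_atTop_isLUB hf hlub⟩

theorem MonotoneOn.exists_lfp_tendsto_iterate [SupConvergenceClass α]
    (hmono : MonotoneOn T (Icc a b)) (hmaps : MapsTo T (Icc a b) (Icc a b))
    (hcont : ContinuousOn T (Icc a b)) (hab : a ≤ b) :
    ∃ L ∈ Icc a b, T L = L ∧ Tendsto (fun n => T^[n] a) atTop (𝓝 L) ∧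
      ∀ y ∈ Icc a b, T y ≤ y → L ≤ y := by
  have hmem : ∀ n, T^[n] a ∈ Icc a b := fun n => hmaps.iterate n ⟨le_rfl, hab⟩
  have hstep : Monotone fun n => T^[n] a := by
    refine monotone_nat_of_le_succ fun n => ?_
    induction n with
    | zero => exact (hmem 1).1
    | succ n ih =>
      rw [Function.iterate_succ_apply', Function.iterate_succ_apply']
      exact hmono (hmem n) (hmem (n + 1)) ih
  obtain ⟨L, hL, hlim⟩ := hstep.exists_tendsto_of_mem_Icc hmem
  refine ⟨L, hL, ?_, hlim, fun y hy hTy => le_of_tendsto' hlim fun n => ?_⟩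
  · have hnext : Tendsto (fun n => T^[n + 1] a) atTop (𝓝 L) :=
      hlim.comp (tendsto_add_atTop_nat 1)
    simp only [Function.iterate_succ_apply'] at hnext
    exact tendsto_nhds_unique ((hcont.continuousWithinAt hL).tendsto.comp
      (tendsto_nhdsWithin_iff.2 ⟨hlim, Eventually.of_forall hmem⟩)) hnext
  · induction n with
    | zero => exact hy.1
    | succ n ih =>
      rw [Function.iterate_succ_apply']
      exact (hmono (hmem n) hy ih).trans hTy

theorem MonotoneOn.exists_gfp_tendsto_iterate [InfConvergenceClass α]
    (hmono : MonotoneOn T (Icc a b)) (hmaps : MapsTo T (Icc a b) (Icc a b))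
    (hcont : ContinuousOn T (Icc a b)) (hab : a ≤ b) :
    ∃ M ∈ Icc a b, T M = M ∧ Tendsto (fun n => T^[n] b) atTop (𝓝 M) ∧
      ∀ y ∈ Icc a b, y ≤ T y → y ≤ M := by
  have hIcc : Icc (OrderDual.toDual b) (OrderDual.toDual a) = Icc a b := by
    rw [Icc_toDual]; rfl
  obtain ⟨M, hM, hfix, hlim, hgfp⟩ := MonotoneOn.exists_lfp_tendsto_iterate (α := αᵒᵈ)
    (a := OrderDual.toDual b) (b := OrderDual.toDual a) (by rw [hIcc]; exact hmono.dual)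
    (by rwa [hIcc]) (by rwa [hIcc]) hab
  exact ⟨M, hIcc ▸ hM, hfix, hlim, fun y hy => hgfp y (hIcc ▸ hy)⟩

end Iteration

section Ray

variable {E : Type*} [AddCommGroup E] [PartialOrder E] [IsOrderedAddMonoid E] [Module ℝ E]
  [PosSMulMono ℝ E]

theorem ConvexOn.add_smul_le_of_one_le {g : ℝ → E} {x d : E} (hg : ConvexOn ℝ (Ici 0) g)
    (h0 : g 0 = x) (h1 : g 1 = x + d) {t : ℝ} (ht : 1 ≤ t) : x + t • d ≤ g t := by
  have htpos : 0 < t := one_pos.trans_le ht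
  have key := hg.2 (mem_Ici.2 htpos.le) (mem_Ici.2 le_rfl) (inv_nonneg.2 htpos.le)
    (sub_nonneg.2 (inv_le_one_of_one_le₀ ht)) (add_sub_cancel _ _)
  rw [smul_eq_mul, inv_mul_cancel₀ htpos.ne', smul_zero, add_zero, h0, h1] at key
  rw [← smul_le_smul_iff_of_pos_left (inv_pos.2 htpos)]
  calc t⁻¹ • (x + t • d) = x + d - (1 - t⁻¹) • x := by
        rw [smul_add, smul_smul, inv_mul_cancel₀ htpos.ne', one_smul, sub_smul, one_smul]; abel
    _ ≤ t⁻¹ • g t := sub_le_iff_le_add.2 key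

variable [TopologicalSpace E] [ContinuousAdd E] [ContinuousSMul ℝ E]

theorem eq_of_convexOn_ray {T : E → E} {L M S : E} (hL : T L = L) (hM : T M = M) (hLM : L ≤ M)
    (hMS : Iic S ∈ 𝓝 M) (hgfp : ∀ y ∈ Icc L S, y ≤ T y → y ≤ M)
    (hconv : ConvexOn ℝ (Ici 0) fun t : ℝ => T (L + t • (M - L))) : L = M := by
  have hd : 0 ≤ M - L := sub_nonneg.2 hLM
  have hray : Tendsto (fun t : ℝ => L + t • (M - L)) (𝓝[>] 1) (𝓝 M) := by
    have hcont : Continuous fun t : ℝ => L + t • (M - L) := by fun_prop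
    simpa using (hcont.tendsto 1).mono_left nhdsWithin_le_nhds
  obtain ⟨t, htS, ht⟩ := ((hray.eventually hMS).and self_mem_nhdsWithin).exists
  have hv : L + t • (M - L) ≤ T (L + t • (M - L)) :=
    hconv.add_smul_le_of_one_le (by simp [hL]) (by simp [hM]) (le_of_lt ht)
  have hvM := hgfp _ ⟨le_add_of_nonneg_right (smul_nonneg (zero_le_one.trans ht.le) hd), htS⟩ hv
  have hsmul : (t - 1) • (M - L) ≤ 0 := by
    rw [sub_smul, one_smul, sub_nonpos]
    exact le_sub_iff_add_le'.2 hvM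
  exact le_antisymm hLM (sub_nonpos.1 ((smul_nonpos_iff_nonpos_of_pos_left (sub_pos.2 ht)).1 hsmul))

end Ray

theorem Prod.Iic_mem_nhds {α β : Type*} [TopologicalSpace α] [LinearOrder α] [ClosedIciTopology α]
    [TopologicalSpace β] [LinearOrder β] [ClosedIciTopology β] {x y : α × β}
    (h₁ : x.1 < y.1) (h₂ : x.2 < y.2) : Iic y ∈ 𝓝 x := by
  rw [nhds_prod_eq, ← Iic_prod_Iic]
  exact Filter.prod_mem_prod (_root_.Iic_mem_nhds h₁) (_root_.Iic_mem_nhds h₂)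

theorem exists_unique_fixedPoint_of_convexOn_ray {T : ℝ × ℝ → ℝ × ℝ} {S : ℝ × ℝ} (hS : 0 ≤ S)
    (hmono : MonotoneOn T (Icc 0 S)) (hmaps : MapsTo T (Icc 0 S) (Icc 0 S))
    (hcont : ContinuousOn T (Icc 0 S)) (htop : (T S).1 < S.1 ∧ (T S).2 < S.2)
    (hconv : ∀ x ∈ Icc 0 S, ∀ d, 0 ≤ d → ConvexOn ℝ (Ici 0) fun t : ℝ => T (x + t • d)) :
    ∃ L ∈ Icc 0 S, T L = L ∧ L.1 < S.1 ∧ L.2 < S.2 ∧ Tendsto (fun n => T^[n] 0) atTop (𝓝 L) ∧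
      ∀ y ∈ Icc 0 S, T y = y → y = L := by
  obtain ⟨L, hL, hLfix, hlim, hlfp⟩ := hmono.exists_lfp_tendsto_iterate hmaps hcont hS
  obtain ⟨M, hM, hMfix, -, hgfp⟩ := hmono.exists_gfp_tendsto_iterate hmaps hcont hS
  have hMS : M.1 < S.1 ∧ M.2 < S.2 := by
    have hTM := hmono hM ⟨hS, le_rfl⟩ hM.2
    rw [hMfix] at hTM
    exact ⟨hTM.1.trans_lt htop.1, hTM.2.trans_lt htop.2⟩
  have hLM : L ≤ M := hlfp M hM hMfix.le
  obtain rfl : L = M := eq_of_convexOn_ray hLfix hMfix hLM (Prod.Iic_mem_nhds hMS.1 hMS.2)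
    (fun y hy => hgfp y ⟨hL.1.trans hy.1, hy.2⟩) (hconv L hL _ (sub_nonneg.2 hLM))
  exact ⟨L, hL, hLfix, hMS.1, hMS.2, hlim,
    fun y hy hfix => le_antisymm (hgfp y hy hfix.ge) (hlfp y hy hfix.le)⟩

theorem ConvexOn.prodMk {𝕜 E β γ : Type*} [Semiring 𝕜] [PartialOrder 𝕜] [AddCommMonoid E]
    [SMul 𝕜 E] [AddCommMonoid β] [PartialOrder β] [SMul 𝕜 β] [AddCommMonoid γ] [PartialOrder γ]
    [SMul 𝕜 γ] {s : Set E} {f : E → β} {g : E → γ} (hf : ConvexOn 𝕜 s f) (hg : ConvexOn 𝕜 s g) :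
    ConvexOn 𝕜 s fun x => (f x, g x) :=
  ⟨hf.1, fun _ hx _ hy _ _ ha hb hab => ⟨hf.2 hx hy ha hb hab, hg.2 hx hy ha hb hab⟩⟩

theorem convexOn_rpow_affine {a u p : ℝ} (ha : 0 ≤ a) (hu : 0 ≤ u) (hp : 1 ≤ p) :
    ConvexOn ℝ (Ici 0) fun t => (a + u * t) ^ p := by
  refine ⟨convex_Ici 0, fun x hx y hy α β hα hβ hαβ => ?_⟩
  have hx' : 0 ≤ a + u * x := add_nonneg ha (mul_nonneg hu hx)
  have hy' : 0 ≤ a + u * y := add_nonneg ha (mul_nonneg hu hy)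
  convert (convexOn_rpow hp).2 hx' hy' hα hβ hαβ using 2
  simp only [smul_eq_mul]
  linear_combination a * hαβ.symm

theorem monotoneOn_rpow_affine {a u p : ℝ} (ha : 0 ≤ a) (hu : 0 ≤ u) (hp : 0 ≤ p) :
    MonotoneOn (fun t => (a + u * t) ^ p) (Ici 0) := fun x hx _ _ hxy => by
  have : 0 ≤ x := hx
  dsimp only
  gcongr

theorem convexOn_mul_rpow_mul_rpow {c a b u v p q : ℝ} (hc : 0 ≤ c) (ha : 0 ≤ a) (hb : 0 ≤ b)
    (hu : 0 ≤ u) (hv : 0 ≤ v) (hp : 1 ≤ p) (hq : 1 ≤ q) :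
    ConvexOn ℝ (Ici 0) fun t => c * (a + u * t) ^ p * (b + v * t) ^ q := by
  have hprod := (convexOn_rpow_affine ha hu hp).mul (convexOn_rpow_affine hb hv hq)
    (fun t ht => by have : 0 ≤ t := ht; positivity) (fun t ht => by have : 0 ≤ t := ht; positivity)
    ((monotoneOn_rpow_affine ha hu (by linarith)).monovaryOn
      (monotoneOn_rpow_affine hb hv (by linarith)))
  simpa only [smul_eq_mul, Pi.mul_apply, mul_assoc] using hprod.smul hc

theorem mul_rpow_mul_rpow_le {c a b p q : ℝ} (hc : 0 ≤ c) (ha₀ : 0 ≤ a) (ha₁ : a ≤ 1)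
    (hb₀ : 0 ≤ b) (hb₁ : b ≤ 1) (hp : 0 ≤ p) (hq : 0 ≤ q) : c * a ^ p * b ^ q ≤ c := by
  rw [mul_assoc]
  exact mul_le_of_le_one_right hc
    (mul_le_one₀ (Real.rpow_le_one ha₀ ha₁ hp) (by positivity) (Real.rpow_le_one hb₀ hb₁ hq))

theorem mul_rpow_mul_rpow_lt {c a b p q : ℝ} (hc : 0 < c) (ha₀ : 0 ≤ a) (ha₁ : a ≤ 1)
    (hb₀ : 0 ≤ b) (hb₁ : b ≤ 1) (hp : 0 < p) (hq : 0 < q) (h : a < 1 ∨ b < 1) :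
    c * a ^ p * b ^ q < c := by
  rw [mul_assoc]
  refine mul_lt_of_lt_one_right hc ?_
  rcases h with ha | hb
  · exact mul_lt_one_of_nonneg_of_lt_one_left (by positivity) (Real.rpow_lt_one ha₀ ha hp)
      (Real.rpow_le_one hb₀ hb₁ hq.le)
  · exact mul_lt_one_of_nonneg_of_lt_one_right (Real.rpow_le_one ha₀ ha₁ hp.le) (by positivity)
      (Real.rpow_lt_one hb₀ hb hq)

/-- Hypotheses (H1) and (H2a) on `Tmap`, phrased through `εⱼ`, `Zⱼ`, `Nⱼ₀`: `le_N10` and `le_N20`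
say that the bases `(εⱼ xⱼ + Zⱼ) / Nⱼ₀` of the powers are at most `1` on `[0, S₁₀] × [0, S₂₀]`. -/
structure TmapAssumptions (β11 β12 β21 β22 μ1 μ2 S10 S20 ε1 ε2 Z1 Z2 N10 N20 : ℝ) : Prop where
  S10_pos : 0 < S10
  S20_pos : 0 < S20
  ε1_nonneg : 0 ≤ ε1
  ε2_nonneg : 0 ≤ ε2
  Z1_pos : 0 < Z1
  Z2_pos : 0 < Z2
  le_N10 : ε1 * S10 + Z1 ≤ N10
  le_N20 : ε2 * S20 + Z2 ≤ N20
  one_le_exponent11 : 1 ≤ β11 / μ1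
  one_le_exponent12 : 1 ≤ β12 / μ2
  one_le_exponent21 : 1 ≤ β21 / μ1
  one_le_exponent22 : 1 ≤ β22 / μ2

namespace TmapAssumptions

variable {β11 β12 β21 β22 μ1 μ2 S10 S20 ε1 ε2 Z1 Z2 N10 N20 : ℝ}

local notation "𝒯" => Tmap β11 β12 β21 β22 μ1 μ2 S10 S20 ε1 ε2 Z1 Z2 N10 N20

theorem N10_pos (h : TmapAssumptions β11 β12 β21 β22 μ1 μ2 S10 S20 ε1 ε2 Z1 Z2 N10 N20) :
    0 < N10 := by
  nlinarith [h.S10_pos, h.ε1_nonneg, h.Z1_pos, h.le_N10]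

theorem N20_pos (h : TmapAssumptions β11 β12 β21 β22 μ1 μ2 S10 S20 ε1 ε2 Z1 Z2 N10 N20) :
    0 < N20 := by
  nlinarith [h.S20_pos, h.ε2_nonneg, h.Z2_pos, h.le_N20]

theorem continuous (h : TmapAssumptions β11 β12 β21 β22 μ1 μ2 S10 S20 ε1 ε2 Z1 Z2 N10 N20) :
    Continuous 𝒯 := by
  obtain ⟨-, -, -, -, -, -, -, -, h₁₁, h₁₂, h₂₁, h₂₂⟩ := h
  unfold Tmap
  fun_prop (disch := first | (intro; right; positivity) | positivity)

theorem monotoneOn (h : TmapAssumptions β11 β12 β21 β22 μ1 μ2 S10 S20 ε1 ε2 Z1 Z2 N10 N20) :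
    MonotoneOn 𝒯 (Ici 0) := by
  have hN₁ := h.N10_pos
  have hN₂ := h.N20_pos
  obtain ⟨hS₁, hS₂, hε₁, hε₂, hZ₁, hZ₂, -, -, h₁₁, h₁₂, h₂₁, h₂₂⟩ := h
  rintro x ⟨hx₁, hx₂⟩ y - ⟨hxy₁, hxy₂⟩
  simp only [Prod.fst_zero, Prod.snd_zero] at hx₁ hx₂
  have hy₁ : 0 ≤ y.1 := hx₁.trans hxy₁
  have hy₂ : 0 ≤ y.2 := hx₂.trans hxy₂
  constructor <;> dsimp only [Tmap] <;> gcongr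

theorem mapsTo (h : TmapAssumptions β11 β12 β21 β22 μ1 μ2 S10 S20 ε1 ε2 Z1 Z2 N10 N20) :
    MapsTo 𝒯 (Icc 0 (S10, S20)) (Icc 0 (S10, S20)) := by
  have hN₁ := h.N10_pos
  have hN₂ := h.N20_pos
  obtain ⟨hS₁, hS₂, hε₁, hε₂, hZ₁, hZ₂, hle₁, hle₂, h₁₁, h₁₂, h₂₁, h₂₂⟩ := h
  rintro x ⟨⟨hx₁, hx₂⟩, hxS₁, hxS₂⟩
  simp only [Prod.fst_zero, Prod.snd_zero] at hx₁ hx₂ hxS₁ hxS₂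
  have hu : (ε1 * x.1 + Z1) / N10 ≤ 1 := div_le_one_of_le₀ (by nlinarith) hN₁.le
  have hw : (ε2 * x.2 + Z2) / N20 ≤ 1 := div_le_one_of_le₀ (by nlinarith) hN₂.le
  refine ⟨⟨by dsimp only [Tmap]; positivity, by dsimp only [Tmap]; positivity⟩, ?_, ?_⟩
  all_goals
    exact mul_rpow_mul_rpow_le (by positivity) (by positivity) hu (by positivity) hw
      (by positivity) (by positivity)

theorem apply_zero_pos (h : TmapAssumptions β11 β12 β21 β22 μ1 μ2 S10 S20 ε1 ε2 Z1 Z2 N10 N20) :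
    0 < (𝒯 0).1 ∧ 0 < (𝒯 0).2 := by
  have hN₁ := h.N10_pos
  have hN₂ := h.N20_pos
  obtain ⟨hS₁, hS₂, -, -, hZ₁, hZ₂, -⟩ := h
  constructor <;> simp only [Tmap, Prod.fst_zero, Prod.snd_zero, mul_zero, zero_add] <;> positivity

theorem apply_lt (h : TmapAssumptions β11 β12 β21 β22 μ1 μ2 S10 S20 ε1 ε2 Z1 Z2 N10 N20)
    (hlt : ε1 * S10 + Z1 < N10 ∨ ε2 * S20 + Z2 < N20) :
    (𝒯 (S10, S20)).1 < S10 ∧ (𝒯 (S10, S20)).2 < S20 := by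
  have hN₁ := h.N10_pos
  have hN₂ := h.N20_pos
  obtain ⟨hS₁, hS₂, hε₁, hε₂, hZ₁, hZ₂, hle₁, hle₂, h₁₁, h₁₂, h₂₁, h₂₂⟩ := h
  have hlt' : (ε1 * S10 + Z1) / N10 < 1 ∨ (ε2 * S20 + Z2) / N20 < 1 :=
    hlt.imp (div_lt_one hN₁).2 (div_lt_one hN₂).2
  constructor
  all_goals
    exact mul_rpow_mul_rpow_lt (by positivity) (by positivity) (div_le_one_of_le₀ hle₁ hN₁.le)
      (by positivity) (div_le_one_of_le₀ hle₂ hN₂.le) (by positivity) (by positivity) hlt'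

theorem convexOn_ray (h : TmapAssumptions β11 β12 β21 β22 μ1 μ2 S10 S20 ε1 ε2 Z1 Z2 N10 N20)
    {x d : ℝ × ℝ} (hx : 0 ≤ x) (hd : 0 ≤ d) : ConvexOn ℝ (Ici 0) fun t : ℝ => 𝒯 (x + t • d) := by
  have hN₁ := h.N10_pos
  have hN₂ := h.N20_pos
  obtain ⟨hS₁, hS₂, hε₁, hε₂, hZ₁, hZ₂, -, -, h₁₁, h₁₂, h₂₁, h₂₂⟩ := h
  obtain ⟨hx₁, hx₂⟩ := hx
  obtain ⟨hd₁, hd₂⟩ := hd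
  simp only [Prod.fst_zero, Prod.snd_zero] at hx₁ hx₂ hd₁ hd₂
  have hcomponent : ∀ c p q : ℝ, 0 ≤ c → 1 ≤ p → 1 ≤ q → ConvexOn ℝ (Ici 0) fun t : ℝ =>
      c * ((ε1 * (x + t • d).1 + Z1) / N10) ^ p * ((ε2 * (x + t • d).2 + Z2) / N20) ^ q := by
    intro c p q hc hp hq
    refine (convexOn_mul_rpow_mul_rpow hc (a := (ε1 * x.1 + Z1) / N10) (u := ε1 * d.1 / N10)
      (b := (ε2 * x.2 + Z2) / N20) (v := ε2 * d.2 / N20) (by positivity) (by positivity)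
      (by positivity) (by positivity) hp hq).congr fun t _ => ?_
    simp only [Prod.fst_add, Prod.snd_add, Prod.smul_fst, Prod.smul_snd, smul_eq_mul]
    ring_nf
  exact (hcomponent _ _ _ hS₁.le h₁₁ h₁₂).prodMk (hcomponent _ _ _ hS₂.le h₂₁ h₂₂)

end TmapAssumptions

theorem epsilon_pos_and_Z_pos {μ γ S I R ε N Z : ℝ} (hμ : 0 < μ) (hγ : 0 < γ) (hS : 0 < S)
    (hI : 0 ≤ I) (hR : 0 ≤ R) (hN : N = S + I + R) (hε : ε = μ / (γ + μ))
    (hZ : Z = (1 - ε) * N + ε * R) : 0 < ε ∧ 0 < Z := by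
  have hε' : 0 < ε := by rw [hε]; positivity
  have h1ε : 0 < 1 - ε := by
    rw [hε, sub_pos, div_lt_one (by positivity)]
    linarith
  refine ⟨hε', ?_⟩
  rw [hZ, hN]
  positivity

theorem stmt_12_general
    (β11 β12 β21 β22 γ1 γ2 μ1 μ2 : ℝ)
    (hγ1 : 0 < γ1) (hγ2 : 0 < γ2) (hμ1 : 0 < μ1) (hμ2 : 0 < μ2)
    (S10 S20 I10 I20 R10 R20 : ℝ)
    (hS10 : 0 < S10) (hS20 : 0 < S20)
    (hI10 : 0 ≤ I10) (hI20 : 0 ≤ I20)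
    (hR10 : 0 ≤ R10) (hR20 : 0 ≤ R20)
    (ε1 ε2 Z1 Z2 N10 N20 : ℝ)
    (hN10 : N10 = S10 + I10 + R10) (hN20 : N20 = S20 + I20 + R20)
    (hε1 : ε1 = μ1 / (γ1 + μ1)) (hε2 : ε2 = μ2 / (γ2 + μ2))
    (hZ1 : Z1 = (1 - ε1) * N10 + ε1 * R10) (hZ2 : Z2 = (1 - ε2) * N20 + ε2 * R20)
    (hI0 : 0 < I10 + I20)
    (hH2a11 : 1 ≤ β11 / μ1) (hH2a12 : 1 ≤ β12 / μ2)
    (hH2a21 : 1 ≤ β21 / μ1) (hH2a22 : 1 ≤ β22 / μ2)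
    (T : ℝ × ℝ → ℝ × ℝ)
    (hT : T = Tmap β11 β12 β21 β22 μ1 μ2 S10 S20 ε1 ε2 Z1 Z2 N10 N20)
    :
    ∃ Sstar : ℝ × ℝ,
      (T Sstar = Sstar ∧
       (0 < Sstar.1 ∧ Sstar.1 < S10) ∧ (0 < Sstar.2 ∧ Sstar.2 < S20) ∧
       Tendsto (fun n => T^[n] (0, 0)) atTop (nhds Sstar)) ∧
      ∀ Y : ℝ × ℝ, Y.1 ∈ Set.Icc (0:ℝ) S10 → Y.2 ∈ Set.Icc (0:ℝ) S20 → T Y = Y → Y = Sstar := by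
  obtain ⟨hε1pos, hZ1pos⟩ := epsilon_pos_and_Z_pos hμ1 hγ1 hS10 hI10 hR10 hN10 hε1 hZ1
  obtain ⟨hε2pos, hZ2pos⟩ := epsilon_pos_and_Z_pos hμ2 hγ2 hS20 hI20 hR20 hN20 hε2 hZ2
  have hK1 : ε1 * S10 + Z1 = N10 - ε1 * I10 := by rw [hZ1, hN10]; ring
  have hK2 : ε2 * S20 + Z2 = N20 - ε2 * I20 := by rw [hZ2, hN20]; ring
  have h : TmapAssumptions β11 β12 β21 β22 μ1 μ2 S10 S20 ε1 ε2 Z1 Z2 N10 N20 :=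
    ⟨hS10, hS20, hε1pos.le, hε2pos.le, hZ1pos, hZ2pos, by nlinarith, by nlinarith,
      hH2a11, hH2a12, hH2a21, hH2a22⟩
  have hlt : ε1 * S10 + Z1 < N10 ∨ ε2 * S20 + Z2 < N20 := by
    rcases lt_or_ge 0 I10 with hI | hI
    · exact Or.inl (by nlinarith)
    · exact Or.inr (by nlinarith)
  subst hT
  obtain ⟨L, hL, hLfix, hL1, hL2, hlim, huniq⟩ := exists_unique_fixedPoint_of_convexOn_ray
    (S := (S10, S20)) ⟨hS10.le, hS20.le⟩ (h.monotoneOn.mono fun _ hx => hx.1) h.mapsTo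
    h.continuous.continuousOn (h.apply_lt hlt) fun _ hx _ hd => h.convexOn_ray hx.1 hd
  have hT0L := hLfix ▸ h.monotoneOn (mem_Ici.2 le_rfl) hL.1 hL.1
  exact ⟨L, ⟨hLfix, ⟨h.apply_zero_pos.1.trans_le hT0L.1, hL1⟩,
    ⟨h.apply_zero_pos.2.trans_le hT0L.2, hL2⟩, hlim⟩,
    fun Y hY1 hY2 hY => huniq Y ⟨⟨hY1.1, hY2.1⟩, hY1.2, hY2.2⟩ hY⟩

theorem stmt_12
    (β11 β12 β21 β22 γ1 γ2 μ1 μ2 : ℝ)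
    (hβ11 : 0 < β11) (hβ12 : 0 < β12) (hβ21 : 0 < β21) (hβ22 : 0 < β22)
    (hγ1 : 0 < γ1) (hγ2 : 0 < γ2) (hμ1 : 0 < μ1) (hμ2 : 0 < μ2)
    (S10 S20 I10 I20 R10 R20 : ℝ)
    (hS10 : 0 < S10) (hS20 : 0 < S20)
    (hI10 : 0 ≤ I10) (hI20 : 0 ≤ I20)
    (hR10 : 0 ≤ R10) (hR20 : 0 ≤ R20)
    (ε1 ε2 Z1 Z2 N10 N20 : ℝ)
    (hN10 : N10 = S10 + I10 + R10) (hN20 : N20 = S20 + I20 + R20)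
    (hε1 : ε1 = μ1 / (γ1 + μ1)) (hε2 : ε2 = μ2 / (γ2 + μ2))
    (hZ1 : Z1 = (1 - ε1) * N10 + ε1 * R10) (hZ2 : Z2 = (1 - ε2) * N20 + ε2 * R20)
    (hI0 : 0 < I10 + I20)
    (hH2a11 : 1 ≤ β11 / μ1) (hH2a12 : 1 ≤ β12 / μ2)
    (hH2a21 : 1 ≤ β21 / μ1) (hH2a22 : 1 ≤ β22 / μ2)
    (T : ℝ × ℝ → ℝ × ℝ)
    (hT : T = Tmap β11 β12 β21 β22 μ1 μ2 S10 S20 ε1 ε2 Z1 Z2 N10 N20)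
    :
    ∃ Sstar : ℝ × ℝ,
      (T Sstar = Sstar ∧
       (0 < Sstar.1 ∧ Sstar.1 < S10) ∧ (0 < Sstar.2 ∧ Sstar.2 < S20) ∧
       Tendsto (fun n => T^[n] (0, 0)) atTop (nhds Sstar)) ∧
      ∀ Y : ℝ × ℝ, Y.1 ∈ Set.Icc (0:ℝ) S10 → Y.2 ∈ Set.Icc (0:ℝ) S20 → T Y = Y → Y = Sstar :=
  stmt_12_general β11 β12 β21 β22 γ1 γ2 μ1 μ2 hγ1 hγ2 hμ1 hμ2 S10 S20 I10 I20 R10 R20 hS10 hS20 hI10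
    hI20 hR10 hR20 ε1 ε2 Z1 Z2 N10 N20 hN10 hN20 hε1 hε2 hZ1 hZ2 hI0 hH2a11 hH2a12 hH2a21 hH2a22 T
    hT
end
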